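/- arXiv:2410.20188 — 8 statements merged into one kernel-verified Lean document; each statement's English description precedes it below -/
import Mathlib

section
/- Let R be a Noetherian commutative ring of prime characteristic p, and let I ⊆ 𝔞 ⊆ √𝔞 ⊊ R be ideals with I ⊆ √𝔞. Then: (a) if N ∈ ℕ satisfies I^N ⊆ 𝔞 and 𝔞 is generated by μ elements, then ν^𝔞_I(p^e)/p^e < N(μ+1) for every e ∈ ℕ (in particular the sequence (ν^𝔞_I(p^e)/p^e)_{e∈ℕ} is bounded); (b) if I is generated by r elements, then for all e₁, e₂ ∈ ℕ one has ν^𝔞_I(p^{e₁+e₂})/p^{e₁+e₂} − ν^𝔞_I(p^{e₁})/p^{e₁} ≤ r/p^{e₁}. -/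
/-- The Frobenius power `I^{[p^e]}`: the ideal generated by `{f^(p^e) : f ∈ I}`. -/
def frobeniusPower (p e : ℕ) {R : Type*} [CommRing R] (I : Ideal R) : Ideal R :=
  Ideal.span ((fun f => f ^ p ^ e) '' (I : Set R))

/-- The ν-invariant `ν^𝔞_I(p^e) = max {n ∈ ℕ : Iⁿ ⊄ 𝔞^{[p^e]}}`. -/
noncomputable def nuInv (p : ℕ) {R : Type*} [CommRing R] (𝔞 I : Ideal R) (e : ℕ) : ℕ :=
  sSup {n : ℕ | ¬ I ^ n ≤ frobeniusPower p e 𝔞}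

section Aux

open Pointwise

variable {R : Type*} [CommRing R]

lemma fp_mem {I : Ideal R} {f : R} (hf : f ∈ I) (p e : ℕ) :
    f ^ p ^ e ∈ frobeniusPower p e I :=
  Ideal.subset_span ⟨f, hf, rfl⟩

lemma fp_mono (p e : ℕ) {I J : Ideal R} (h : I ≤ J) :
    frobeniusPower p e I ≤ frobeniusPower p e J :=
  Ideal.span_mono (Set.image_mono h)

lemma fp_comp (p : ℕ) (hp : p.Prime) [CharP R p] (e₁ e₂ : ℕ) (I : Ideal R) :
    frobeniusPower p e₂ (frobeniusPower p e₁ I) ≤ frobeniusPower p (e₁ + e₂) I := by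
  haveI : Fact p.Prime := ⟨hp⟩
  refine Ideal.span_le.mpr ?_
  rintro _ ⟨g, hg, rfl⟩
  induction hg using Submodule.span_induction with
  | mem x hx =>
    obtain ⟨f, hf, rfl⟩ := hx
    dsimp only
    rw [← pow_mul, ← pow_add]
    exact fp_mem hf p (e₁ + e₂)
  | zero =>
    dsimp only
    rw [zero_pow (pow_pos hp.pos e₂).ne']
    exact zero_mem _
  | add a b _ _ ha hb =>
    dsimp only at ha hb ⊢
    rw [add_pow_char_pow]
    exact add_mem ha hb
  | smul r a _ ha =>
    dsimp only at ha ⊢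
    rw [smul_eq_mul, mul_pow]
    exact Ideal.mul_mem_left _ _ ha

lemma span_set_pow (s : Set R) (n : ℕ) :
    Ideal.span (s ^ n) = Ideal.span s ^ n := by
  induction n with
  | zero => rw [pow_zero, pow_zero, Ideal.one_eq_top, Ideal.span_one]
  | succ n ih => rw [pow_succ, pow_succ, ← ih, Ideal.span_mul_span']

lemma prod_pow_mem (I : Ideal R) (s : Finset R) (hs : ∀ g ∈ s, g ∈ I) (b : R → ℕ) :
    (∏ g ∈ s, g ^ b g) ∈ I ^ (∑ g ∈ s, b g) := by
  classical
  induction s using Finset.induction_on with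
  | empty => simp [Ideal.one_eq_top]
  | insert a t h ih =>
    rw [Finset.prod_insert h, Finset.sum_insert h, pow_add]
    exact Ideal.mul_mem_mul
      (Ideal.pow_mem_pow (hs a (Finset.mem_insert_self a t)) _)
      (ih fun g hg => hs g (Finset.mem_insert_of_mem hg))

/-- Pigeonhole key lemma: a high enough ordinary power of a finitely generated ideal
lands in the Frobenius power of a given ordinary power. -/
lemma key (p : ℕ) (hp : 0 < p) (e : ℕ) (s : Finset R) (m : ℕ) :
    Ideal.span (s : Set R) ^ (s.card * (p ^ e - 1) + p ^ e * m + 1) ≤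
      frobeniusPower p e (Ideal.span (s : Set R) ^ (m + 1)) := by
  classical
  set q := p ^ e with hq
  have hq1 : 1 ≤ q := Nat.one_le_pow _ _ hp
  set n := s.card * (q - 1) + q * m + 1 with hn
  rw [← span_set_pow]
  refine Ideal.span_le.mpr ?_
  intro x hx
  rw [Set.mem_pow] at hx
  obtain ⟨f, hfx⟩ := hx
  have hx' : ∏ i : Fin n, (f i : R) = x := by rw [← hfx, List.prod_ofFn]
  set a : R → ℕ := fun t => (Finset.univ.filter (fun i : Fin n => (f i : R) = t)).card with ha
  have hmaps : ∀ i ∈ (Finset.univ : Finset (Fin n)), (f i : R) ∈ s :=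
    fun i _ => Finset.mem_coe.mp (f i).2
  have hsum : ∑ t ∈ s, a t = n := by
    have := Finset.card_eq_sum_card_fiberwise hmaps
    simpa [ha] using this.symm
  have hprod : ∏ t ∈ s, t ^ a t = x := by
    rw [← hx', ← Finset.prod_fiberwise_of_maps_to hmaps (fun i : Fin n => (f i : R))]
    refine Finset.prod_congr rfl fun t _ => ?_
    rw [Finset.prod_congr rfl (fun i hi => (Finset.mem_filter.mp hi).2),
      Finset.prod_const]
  set b : R → ℕ := fun t => a t / q with hb
  set c : R → ℕ := fun t => a t % q with hc
  have hbc : ∀ t, a t = q * b t + c t := fun t => (Nat.div_add_mod (a t) q).symm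
  have hcle : ∀ t ∈ s, c t ≤ q - 1 :=
    fun t _ => Nat.le_sub_one_of_lt (Nat.mod_lt _ hq1)
  have hcsum : ∑ t ∈ s, c t ≤ s.card * (q - 1) := by
    calc ∑ t ∈ s, c t ≤ ∑ _t ∈ s, (q - 1) := Finset.sum_le_sum hcle
      _ = s.card * (q - 1) := by rw [Finset.sum_const, smul_eq_mul]
  have hbsum : m + 1 ≤ ∑ t ∈ s, b t := by
    have h1 : q * (∑ t ∈ s, b t) + ∑ t ∈ s, c t = n := by
      rw [Finset.mul_sum, ← Finset.sum_add_distrib]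
      rw [← hsum]
      exact Finset.sum_congr rfl fun t _ => (hbc t).symm
    have h2 : q * m + 1 ≤ q * ∑ t ∈ s, b t := by omega
    have h3 : q * m < q * ∑ t ∈ s, b t := lt_of_lt_of_le (Nat.lt_succ_self _) h2
    exact Nat.lt_of_mul_lt_mul_left h3
  have hxeq : x = (∏ t ∈ s, t ^ b t) ^ q * ∏ t ∈ s, t ^ c t := by
    rw [← hprod, ← Finset.prod_pow, ← Finset.prod_mul_distrib]
    refine Finset.prod_congr rfl fun t _ => ?_
    rw [← pow_mul, mul_comm (b t) q, ← pow_add, ← hbc t]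
  have hy : (∏ t ∈ s, t ^ b t) ∈ Ideal.span (s : Set R) ^ (m + 1) :=
    Ideal.pow_le_pow_right hbsum
      (prod_pow_mem _ s (fun g hg => Ideal.subset_span hg) b)
  rw [hxeq]
  exact Ideal.mul_mem_right _ _ (fp_mem hy p e)

/-- If `I^N ≤ 𝔞` and `𝔞` is generated by `s`, then `I^n ≤ 𝔞^{[p^e]}` for all large `n`. -/
lemma bound_aux (p : ℕ) (hp : 0 < p) (e : ℕ) (I 𝔞 : Ideal R) (N : ℕ) (s : Finset R)
    (hs : Ideal.span (s : Set R) = 𝔞) (hIN : I ^ N ≤ 𝔞) {n : ℕ}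
    (hn : N * (s.card * (p ^ e - 1) + 1) ≤ n) :
    I ^ n ≤ frobeniusPower p e 𝔞 := by
  calc I ^ n ≤ I ^ (N * (s.card * (p ^ e - 1) + 1)) := Ideal.pow_le_pow_right hn
    _ = (I ^ N) ^ (s.card * (p ^ e - 1) + 1) := by rw [← pow_mul]
    _ ≤ 𝔞 ^ (s.card * (p ^ e - 1) + 1) := Ideal.pow_right_mono hIN _
    _ = Ideal.span (s : Set R) ^ (s.card * (p ^ e - 1) + p ^ e * 0 + 1) := by rw [hs]; ring_nf
    _ ≤ frobeniusPower p e (Ideal.span (s : Set R) ^ (0 + 1)) := key p hp e s 0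
    _ = frobeniusPower p e 𝔞 := by rw [zero_add, pow_one, hs]

end Aux

/-- Let `R` be a Noetherian commutative ring of prime characteristic `p`,
and let `I ⊆ √𝔞 ⊊ R` be ideals. Then:
(a) if `I^N ⊆ 𝔞` and `𝔞` is generated by `μ` elements, then `ν^𝔞_I(p^e)/p^e < N(μ+1)`
for every `e`; (b) if `I` is generated by `r` elements, then for all `e₁, e₂` one has
`ν^𝔞_I(p^{e₁+e₂})/p^{e₁+e₂} − ν^𝔞_I(p^{e₁})/p^{e₁} ≤ r/p^{e₁}`. -/
theorem nuInv_growth {R : Type*} [CommRing R] [IsNoetherianRing R]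
    (p : ℕ) (hp : p.Prime) [CharP R p]
    (I 𝔞 : Ideal R) (hrad : I ≤ 𝔞.radical) (hproper : 𝔞.radical ≠ ⊤) :
    (∀ N μ : ℕ, I ^ N ≤ 𝔞 →
      (∃ s : Finset R, s.card = μ ∧ Ideal.span (s : Set R) = 𝔞) →
      ∀ e : ℕ, (nuInv p 𝔞 I e : ℝ) / (p : ℝ) ^ e < (N : ℝ) * ((μ : ℝ) + 1)) ∧
    (∀ r : ℕ, (∃ s : Finset R, s.card = r ∧ Ideal.span (s : Set R) = I) →
      ∀ e₁ e₂ : ℕ,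
        (nuInv p 𝔞 I (e₁ + e₂) : ℝ) / (p : ℝ) ^ (e₁ + e₂)
          - (nuInv p 𝔞 I e₁ : ℝ) / (p : ℝ) ^ e₁ ≤ (r : ℝ) / (p : ℝ) ^ e₁) := by
  have hppos : 0 < p := hp.pos
  -- data for boundedness: some power of I lies in 𝔞, and 𝔞 is finitely generated
  obtain ⟨N₀, hN₀⟩ := Ideal.exists_radical_pow_le_of_fg 𝔞 (IsNoetherian.noetherian _)
  have hIN₀ : I ^ N₀ ≤ 𝔞 := le_trans (Ideal.pow_right_mono hrad N₀) hN₀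
  obtain ⟨t, ht⟩ : 𝔞.FG := IsNoetherian.noetherian 𝔞
  -- membership of n in the ν-set forces n < bound
  have hlt : ∀ e n, ¬ I ^ n ≤ frobeniusPower p e 𝔞 →
      n < N₀ * (t.card * (p ^ e - 1) + 1) := by
    intro e n hn
    by_contra h
    exact hn (bound_aux p hppos e I 𝔞 N₀ t ht hIN₀ (not_lt.mp h))
  have hbdd : ∀ e, BddAbove {n : ℕ | ¬ I ^ n ≤ frobeniusPower p e 𝔞} :=
    fun e => ⟨N₀ * (t.card * (p ^ e - 1) + 1), fun n hn => (hlt e n hn).le⟩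
  -- I ^ (ν + 1) lies in the Frobenius power
  have hsucc : ∀ e, I ^ (nuInv p 𝔞 I e + 1) ≤ frobeniusPower p e 𝔞 := by
    intro e
    by_contra h
    have : nuInv p 𝔞 I e + 1 ≤ nuInv p 𝔞 I e := le_csSup (hbdd e) h
    omega
  constructor
  · -- part (a)
    rintro N μ hIN ⟨s, hcard, hspan⟩ e
    have hNpos : 0 < N := by
      rcases Nat.eq_zero_or_pos N with h | h
      · exfalso
        apply hproper
        have ha : 𝔞 = ⊤ := by
          rw [h, pow_zero, Ideal.one_eq_top] at hIN
          exact top_le_iff.mp hIN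
        rw [eq_top_iff, ← ha]
        exact Ideal.le_radical
      · exact h
    set q := p ^ e with hq
    have hq1 : 1 ≤ q := Nat.one_le_pow _ _ hppos
    have hν : nuInv p 𝔞 I e < N * ((μ + 1) * q) := by
      have h1 : nuInv p 𝔞 I e ≤ N * (μ * (q - 1) + 1) - 1 := by
        refine csSup_le' fun n hn => ?_
        have : n < N * (s.card * (q - 1) + 1) := by
          by_contra h
          exact hn (bound_aux p hppos e I 𝔞 N s hspan hIN (not_lt.mp h))
        rw [hcard] at this
        omega
      have h2 : μ * (q - 1) + 1 ≤ (μ + 1) * q := by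
        have := Nat.mul_le_mul_left μ (Nat.sub_le q 1)
        nlinarith
      have h3 : N * (μ * (q - 1) + 1) ≤ N * ((μ + 1) * q) := Nat.mul_le_mul_left N h2
      have h4 : 0 < N * (μ * (q - 1) + 1) := Nat.mul_pos hNpos (Nat.succ_pos _)
      omega
    rw [div_lt_iff₀ (by positivity)]
    have h : (nuInv p 𝔞 I e : ℝ) < ((N * ((μ + 1) * q) : ℕ) : ℝ) := by exact_mod_cast hν
    push_cast [hq] at h
    rw [mul_assoc]
    exact h
  · -- part (b)
    rintro r ⟨s, hcard, hspan⟩ e₁ e₂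
    set ν₁ := nuInv p 𝔞 I e₁ with hν₁
    set q₂ := p ^ e₂ with hq₂
    -- the crucial containment at level e₁ + e₂
    have hkey : I ^ (r * (q₂ - 1) + q₂ * ν₁ + 1) ≤ frobeniusPower p (e₁ + e₂) 𝔞 := by
      calc I ^ (r * (q₂ - 1) + q₂ * ν₁ + 1)
          = Ideal.span (s : Set R) ^ (s.card * (q₂ - 1) + q₂ * ν₁ + 1) := by
            rw [hspan, hcard]
        _ ≤ frobeniusPower p e₂ (Ideal.span (s : Set R) ^ (ν₁ + 1)) := key p hppos e₂ s ν₁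
        _ = frobeniusPower p e₂ (I ^ (ν₁ + 1)) := by rw [hspan]
        _ ≤ frobeniusPower p e₂ (frobeniusPower p e₁ 𝔞) := fp_mono p e₂ (hsucc e₁)
        _ ≤ frobeniusPower p (e₁ + e₂) 𝔞 := fp_comp p hp e₁ e₂ 𝔞
    have hν₂ : nuInv p 𝔞 I (e₁ + e₂) ≤ r * (q₂ - 1) + q₂ * ν₁ := by
      refine csSup_le' fun n hn => ?_
      rw [Set.mem_setOf_eq] at hn
      by_contra h
      exact hn (le_trans (Ideal.pow_le_pow_right (by omega)) hkey)
    have hν₂' : nuInv p 𝔞 I (e₁ + e₂) ≤ r * q₂ + q₂ * ν₁ :=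
      le_trans hν₂ (by
        have : r * (q₂ - 1) ≤ r * q₂ := Nat.mul_le_mul_left r (Nat.sub_le q₂ 1)
        omega)
    have hA : (0 : ℝ) < (p : ℝ) ^ e₁ := by positivity
    have hB : (0 : ℝ) < (p : ℝ) ^ e₂ := by positivity
    have hcast : (nuInv p 𝔞 I (e₁ + e₂) : ℝ) ≤ (r : ℝ) * (p : ℝ) ^ e₂ + (p : ℝ) ^ e₂ * ν₁ := by
      have := (Nat.cast_le (α := ℝ)).mpr hν₂'
      push_cast [hq₂] at this
      linarith
    rw [pow_add]
    have h2 : (nuInv p 𝔞 I (e₁ + e₂) : ℝ) / ((p : ℝ) ^ e₁ * (p : ℝ) ^ e₂)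
        ≤ ((r : ℝ) * (p : ℝ) ^ e₂ + (p : ℝ) ^ e₂ * ν₁) / ((p : ℝ) ^ e₁ * (p : ℝ) ^ e₂) :=
      (div_le_div_iff_of_pos_right (by positivity)).mpr hcast
    have h3 : ((r : ℝ) * (p : ℝ) ^ e₂ + (p : ℝ) ^ e₂ * ν₁) / ((p : ℝ) ^ e₁ * (p : ℝ) ^ e₂)
        = (r : ℝ) / (p : ℝ) ^ e₁ + (ν₁ : ℝ) / (p : ℝ) ^ e₁ := by
      field_simp
    rw [h3] at h2
    linarith
end

section
/- Let K be a perfect field of characteristic p, R = K[x₁,…,x_n] the polynomial ring, and let 𝔞, I be ideals of R with R ⊋ √𝔞 ⊇ I. Then for every e ∈ ℕ one has p·ν^𝔞_I(p^e) ≤ ν^𝔞_I(p^{e+1}); in particular the sequence (ν^𝔞_I(p^e)/p^e)_{e∈ℕ} is non-decreasing. -/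
namespace NuAux

open MvPolynomial

variable (p : ℕ) [Fact p.Prime] {K : Type*} [Field K] [CharP K p] [PerfectRing K p]
  {n : ℕ}

local notation "R" => MvPolynomial (Fin n) K

lemma ppos : 0 < p := (Fact.out : p.Prime).pos

/-- divide a monomial exponent by p -/
noncomputable def pdiv (m : Fin n →₀ ℕ) : Fin n →₀ ℕ :=
  m.mapRange (· / p) (Nat.zero_div p)

lemma pdiv_smul (m : Fin n →₀ ℕ) : pdiv p (p • m) = m := by
  ext i
  simp [pdiv, Finsupp.mapRange_apply, Nat.mul_div_cancel_left _ (ppos p)]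

lemma smul_pdiv {m : Fin n →₀ ℕ} (h : ∀ i, p ∣ m i) : p • (pdiv p m) = m := by
  ext i
  simp only [pdiv, Finsupp.smul_apply, Finsupp.mapRange_apply, smul_eq_mul]
  exact Nat.mul_div_cancel' (h i)

lemma smul_inj {a b : Fin n →₀ ℕ} (h : p • a = p • b) : a = b := by
  ext i
  have := DFunLike.congr_fun h i
  simp only [Finsupp.smul_apply, smul_eq_mul] at this
  exact Nat.eq_of_mul_eq_mul_left (ppos p) this

/-- `f ^ p` as a sum of monomials. -/
lemma pow_p_eq (f : R) :
    f ^ p = ∑ m ∈ f.support, monomial (p • m) ((coeff m f) ^ p) := by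
  rw [show f ^ p = frobenius R p f from rfl]
  conv_lhs => rw [f.as_sum]
  rw [map_sum (frobenius R p)]
  refine Finset.sum_congr rfl fun m _ => ?_
  rw [frobenius_def, monomial_pow]

lemma coeff_pow_p_smul (f : R) (l : Fin n →₀ ℕ) :
    coeff (p • l) (f ^ p) = (coeff l f) ^ p := by
  rw [pow_p_eq, coeff_sum]
  rw [Finset.sum_eq_single l]
  · simp [coeff_monomial]
  · intro m _ hm
    rw [coeff_monomial, if_neg (fun h => hm (smul_inj p h))]
  · intro hl
    rw [coeff_monomial, if_pos rfl, MvPolynomial.notMem_support_iff.mp hl,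
      zero_pow (Fact.out : p.Prime).ne_zero]

lemma coeff_pow_p_not_dvd (f : R) {b : Fin n →₀ ℕ} (h : ¬ ∀ i, p ∣ b i) :
    coeff b (f ^ p) = 0 := by
  rw [pow_p_eq, coeff_sum]
  refine Finset.sum_eq_zero fun m _ => ?_
  rw [coeff_monomial, if_neg]
  rintro rfl
  exact h fun i => ⟨m i, rfl⟩

/-- The p-th root contraction map. -/
noncomputable def contract (f : R) : R :=
  ∑ m ∈ f.support,
    if ∀ i, p ∣ m i then
      monomial (pdiv p m) ((frobeniusEquiv K p).symm (coeff m f)) else 0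

lemma coeff_contract (f : R) (l : Fin n →₀ ℕ) :
    coeff l (contract p f) = (frobeniusEquiv K p).symm (coeff (p • l) f) := by
  rw [contract, coeff_sum]
  rw [Finset.sum_eq_single (p • l)]
  · rw [if_pos (fun i => ⟨l i, rfl⟩), coeff_monomial, pdiv_smul, if_pos rfl]
  · intro m _ hm
    split_ifs with h
    · rw [coeff_monomial, if_neg]
      intro hl
      exact hm (by rw [← smul_pdiv p h, hl])
    · simp
  · intro hl
    rw [MvPolynomial.notMem_support_iff.mp hl, map_zero]
    rw [if_pos (fun i => ⟨l i, rfl⟩), coeff_monomial, pdiv_smul]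
    simp

lemma contract_add (f g : R) : contract p (f + g) = contract p f + contract p g := by
  apply MvPolynomial.ext
  intro l
  simp [coeff_contract, coeff_add, map_add]

lemma contract_zero : contract p (0 : R) = 0 := by
  apply MvPolynomial.ext
  intro l
  simp [coeff_contract]

/-- Bundled version as an additive monoid hom. -/
noncomputable def contractHom : R →+ R where
  toFun := contract p
  map_zero' := contract_zero p
  map_add' := contract_add p

lemma contract_mul_pow_p (c f : R) : contract p (c * f ^ p) = contract p c * f := by
  apply MvPolynomial.ext
  intro l
  rw [coeff_contract, MvPolynomial.coeff_mul, MvPolynomial.coeff_mul, map_sum]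
  have key : ∀ x ∈ Finset.HasAntidiagonal.antidiagonal (p • l),
      (frobeniusEquiv K p).symm (coeff x.1 c * coeff x.2 (f ^ p)) =
      (frobeniusEquiv K p).symm (coeff x.1 c) *
        (frobeniusEquiv K p).symm (coeff x.2 (f ^ p)) := by
    intro x _; rw [map_mul]
  rw [Finset.sum_congr rfl key]
  -- restrict the sum to the image of antidiagonal l under p-scaling
  have himg : Finset.image (fun x : (Fin n →₀ ℕ) × (Fin n →₀ ℕ) => (p • x.1, p • x.2))
      (Finset.HasAntidiagonal.antidiagonal l) ⊆ Finset.HasAntidiagonal.antidiagonal (p • l) := by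
    intro x hx
    obtain ⟨y, hy, rfl⟩ := Finset.mem_image.mp hx
    rw [Finset.HasAntidiagonal.mem_antidiagonal] at hy ⊢
    rw [← smul_add, hy]
  rw [← Finset.sum_subset himg]
  · rw [Finset.sum_image (by
      intro a _ b _ hab
      obtain ⟨h1, h2⟩ := Prod.mk.injEq _ _ _ _ ▸ hab
      exact Prod.ext (smul_inj p h1) (smul_inj p h2))]
    refine Finset.sum_congr rfl fun x _ => ?_
    simp only [coeff_pow_p_smul, coeff_contract]
    congr 1
    exact frobeniusEquiv_symm_apply_frobenius K p _
  · intro x hx hnx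
    by_cases h2 : ∀ i, p ∣ x.2 i
    · exfalso
      apply hnx
      rw [Finset.HasAntidiagonal.mem_antidiagonal] at hx
      have h1 : ∀ i, p ∣ x.1 i := by
        intro i
        have hxi : x.1 i + x.2 i = p * l i := by
          have := DFunLike.congr_fun hx i; simpa using this
        obtain ⟨k, hk⟩ := h2 i
        refine ⟨l i - k, ?_⟩
        have h1 : x.1 i = p * l i - p * k := by omega
        rw [h1, Nat.mul_sub]
      refine Finset.mem_image.mpr ⟨(pdiv p x.1, pdiv p x.2), ?_, ?_⟩
      · rw [Finset.HasAntidiagonal.mem_antidiagonal]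
        apply smul_inj p
        rw [smul_add, smul_pdiv p h1, smul_pdiv p h2, hx]
      · rw [Prod.mk.injEq]
        exact ⟨smul_pdiv p h1, smul_pdiv p h2⟩
    · rw [coeff_pow_p_not_dvd p f h2, map_zero, mul_zero]

lemma contract_one : contract p (1 : R) = 1 := by
  apply MvPolynomial.ext
  intro l
  rw [coeff_contract, MvPolynomial.coeff_one, MvPolynomial.coeff_one]
  by_cases hl : l = 0
  · subst hl
    simp
  · rw [if_neg (fun h => hl (smul_inj p (by rw [← h, smul_zero]))), map_zero,
      if_neg (fun h => hl h.symm)]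

lemma contract_pow_p (f : R) : contract p (f ^ p) = f := by
  have h1 := contract_mul_pow_p p (1 : R) f
  rwa [one_mul, contract_one, one_mul] at h1

/-- Frobenius descent: if `g ^ p` lies in the ideal generated by p-th powers of `J`,
then `g ∈ J`. -/
lemma descent (J : Ideal R) (g : R)
    (h : g ^ p ∈ Ideal.span ((fun f => f ^ p) '' (J : Set R))) : g ∈ J := by
  rw [Ideal.span, Submodule.mem_span_set] at h
  obtain ⟨c, hsupp, hsum⟩ := h
  have hg : g = contract p (g ^ p) := (contract_pow_p p g).symm
  rw [hg, ← hsum]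
  have hms : contract p (c.sum fun mi r => r • mi) = c.sum fun mi r => contract p (r • mi) :=
    map_finsuppSum (contractHom p (K := K) (n := n)) c _
  rw [hms, Finsupp.sum]
  apply Ideal.sum_mem
  intro i hi
  obtain ⟨f, hf, rfl⟩ := hsupp hi
  show contract p (c (f ^ p) • f ^ p) ∈ J
  rw [smul_eq_mul, contract_mul_pow_p]
  exact Ideal.mul_mem_left _ _ hf

lemma fp_succ (𝔞 : Ideal R) (e : ℕ) :
    frobeniusPower p (e + 1) 𝔞 =
      Ideal.span ((fun f => f ^ p) '' ((frobeniusPower p e 𝔞 : Ideal R) : Set R)) := by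
  have h1 : ((fun f => f ^ p) '' ((frobeniusPower p e 𝔞 : Ideal R) : Set R)) =
      ⇑(frobenius R p) '' ((frobeniusPower p e 𝔞 : Ideal R) : Set R) := by
    apply Set.image_congr
    intro f _
    rw [frobenius_def]
  rw [h1, ← Ideal.map_span (frobenius R p) ((frobeniusPower p e 𝔞 : Ideal R) : Set R)]
  rw [show Ideal.span ((frobeniusPower p e 𝔞 : Ideal R) : Set R) = frobeniusPower p e 𝔞 from
    Ideal.span_eq _]
  rw [frobeniusPower, frobeniusPower, Ideal.map_span, ← Set.image_comp]
  congr 1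
  apply Set.image_congr
  intro f _
  show f ^ p ^ (e + 1) = (⇑(frobenius R p) ∘ fun f => f ^ p ^ e) f
  simp only [Function.comp_apply, frobenius_def, ← pow_mul, pow_succ]

/-- The key step: `I^(p*m) ≤ 𝔞^[p^(e+1)]` implies `I^m ≤ 𝔞^[p^e]`. -/
lemma step (𝔞 I : Ideal R) (e m : ℕ)
    (h : I ^ (p * m) ≤ frobeniusPower p (e + 1) 𝔞) :
    I ^ m ≤ frobeniusPower p e 𝔞 := by
  intro f hf
  apply descent p
  rw [← fp_succ]
  apply h
  have hfp : f ^ p ∈ (I ^ m) ^ p := Ideal.pow_mem_pow hf p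
  rwa [← pow_mul, mul_comm m p] at hfp

end NuAux

/-- Let `K` be a perfect field of characteristic `p`,
`R = K[x₁,…,xₙ]`, and `𝔞, I` ideals of `R` with `R ⊋ √𝔞 ⊇ I`. Then for every `e`
one has `p·ν^𝔞_I(p^e) ≤ ν^𝔞_I(p^{e+1})`; in particular the sequence
`(ν^𝔞_I(p^e)/p^e)` is non-decreasing. -/
theorem nuInv_monotone (p : ℕ) [Fact p.Prime] (K : Type*) [Field K] [CharP K p]
    [PerfectRing K p] (n : ℕ)
    (I 𝔞 : Ideal (MvPolynomial (Fin n) K))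
    (hrad : I ≤ 𝔞.radical) (hproper : 𝔞.radical ≠ ⊤) :
    (∀ e : ℕ, p * nuInv p 𝔞 I e ≤ nuInv p 𝔞 I (e + 1)) ∧
    Monotone (fun e : ℕ => (nuInv p 𝔞 I e : ℝ) / (p : ℝ) ^ e) := by
  have hp : p.Prime := Fact.out
  have hpe_pos : ∀ e : ℕ, 0 < p ^ e := fun e => Nat.pow_pos hp.pos
  -- `𝔞^[p^e] ≤ √𝔞`, so it is proper
  have hfp_le : ∀ e : ℕ, frobeniusPower p e 𝔞 ≤ 𝔞.radical := by
    intro e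
    rw [frobeniusPower, Ideal.span_le]
    rintro x ⟨f, hf, rfl⟩
    exact Ideal.pow_mem_of_mem _ (Ideal.le_radical hf) _ (hpe_pos e)
  have hfp_ne_top : ∀ e : ℕ, frobeniusPower p e 𝔞 ≠ ⊤ := by
    intro e h
    exact hproper (top_le_iff.mp (h ▸ hfp_le e))
  have hrad_fp : ∀ e : ℕ, I ≤ (frobeniusPower p e 𝔞).radical := by
    intro e
    refine hrad.trans ?_
    have h𝔞 : 𝔞 ≤ (frobeniusPower p e 𝔞).radical := by
      intro f hf
      exact ⟨p ^ e, Ideal.subset_span ⟨f, hf, rfl⟩⟩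
    calc 𝔞.radical ≤ (frobeniusPower p e 𝔞).radical.radical := Ideal.radical_mono h𝔞
    _ = (frobeniusPower p e 𝔞).radical := Ideal.radical_idem _
  have hmem0 : ∀ e : ℕ, 0 ∈ {m : ℕ | ¬ I ^ m ≤ frobeniusPower p e 𝔞} := by
    intro e h
    rw [pow_zero, Ideal.one_eq_top, top_le_iff] at h
    exact hfp_ne_top e h
  have hbdd : ∀ e : ℕ, BddAbove {m : ℕ | ¬ I ^ m ≤ frobeniusPower p e 𝔞} := by
    intro e
    obtain ⟨N, hN⟩ := Ideal.exists_radical_pow_le_of_fg (frobeniusPower p e 𝔞)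
      (IsNoetherian.noetherian _)
    refine ⟨N, fun m hm => ?_⟩
    by_contra hcon
    push_neg at hcon
    apply hm
    calc I ^ m ≤ I ^ N := Ideal.pow_le_pow_right hcon.le
    _ ≤ (frobeniusPower p e 𝔞).radical ^ N := Ideal.pow_right_mono (hrad_fp e) N
    _ ≤ frobeniusPower p e 𝔞 := hN
  have hmem : ∀ e : ℕ, nuInv p 𝔞 I e ∈ {m : ℕ | ¬ I ^ m ≤ frobeniusPower p e 𝔞} :=
    fun e => Nat.sSup_mem ⟨0, hmem0 e⟩ (hbdd e)
  have key : ∀ e : ℕ, p * nuInv p 𝔞 I e ≤ nuInv p 𝔞 I (e + 1) := by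
    intro e
    apply le_csSup (hbdd (e + 1))
    intro hcon
    exact hmem e (NuAux.step p 𝔞 I e (nuInv p 𝔞 I e) hcon)
  refine ⟨key, ?_⟩
  apply monotone_nat_of_le_succ
  intro e
  have hppos : (0 : ℝ) < (p : ℝ) := by exact_mod_cast hp.pos
  rw [div_le_div_iff₀ (by positivity) (by positivity)]
  have hcast : ((nuInv p 𝔞 I e : ℝ)) * (p : ℝ) ^ (e + 1)
      = ((p * nuInv p 𝔞 I e : ℕ) : ℝ) * (p : ℝ) ^ e := by
    push_cast
    ring
  rw [hcast]
  have hc : ((p * nuInv p 𝔞 I e : ℕ) : ℝ) ≤ ((nuInv p 𝔞 I (e + 1) : ℕ) : ℝ) := by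
    exact_mod_cast key e
  exact mul_le_mul_of_nonneg_right hc (by positivity)
end

section
/- Let K be a perfect field of characteristic p, R = K[x₁,…,x_n] the polynomial ring, and let 𝔞, I be ideals of R with R ⊋ √𝔞 ⊇ I and I ≠ 0. Then the sequence (ν^𝔞_I(p^e)/p^e)_{e∈ℕ} converges to a real number c^𝔞(I), and for every e ∈ ℕ the strict inequality ν^𝔞_I(p^e)/p^e < c^𝔞(I) holds. -/
open Filter

section Aux

open MvPolynomial

variable {p : ℕ} [Fact p.Prime] {K : Type*} [Field K] {n : ℕ}

lemma FT.smulAdd_inj (P : ℕ) (hP : 0 < P) (a : Fin n →₀ ℕ) :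
    Function.Injective (fun m : Fin n →₀ ℕ => P • m + a) := by
  intro m m' h
  ext i
  have h1 := congrArg (fun g : Fin n →₀ ℕ => g i) h
  simp only [Finsupp.add_apply, Finsupp.smul_apply, smul_eq_mul] at h1
  exact Nat.eq_of_mul_eq_mul_left hP (Nat.add_right_cancel h1)

/-- The "Cartier-type" operator sending `∑_m c_m x^m` to `∑_m ρ(c_{P m + a}) x^m`. -/
noncomputable def FT.Vop (P : ℕ) (hP : 0 < P) (a : Fin n →₀ ℕ) (ρ : K →+* K)
    (f : MvPolynomial (Fin n) K) : MvPolynomial (Fin n) K :=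
  AddMonoidAlgebra.ofCoeff (Finsupp.mapRange ρ ρ.map_zero
    (Finsupp.comapDomain (fun m : Fin n →₀ ℕ => P • m + a) (AddMonoidAlgebra.coeff f) ((FT.smulAdd_inj P hP a).injOn)))

namespace FT

lemma coeff_Vop (P : ℕ) (hP : 0 < P) (a : Fin n →₀ ℕ) (ρ : K →+* K)
    (f : MvPolynomial (Fin n) K) (m : Fin n →₀ ℕ) :
    coeff m (Vop P hP a ρ f) = ρ (coeff (P • m + a) f) := rfl

lemma Vop_add (P : ℕ) (hP : 0 < P) (a : Fin n →₀ ℕ) (ρ : K →+* K)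
    (f g : MvPolynomial (Fin n) K) :
    Vop P hP a ρ (f + g) = Vop P hP a ρ f + Vop P hP a ρ g := by
  apply MvPolynomial.ext
  intro m
  simp [coeff_Vop, coeff_add]

lemma Vop_zero (P : ℕ) (hP : 0 < P) (a : Fin n →₀ ℕ) (ρ : K →+* K) :
    Vop P hP a ρ (0 : MvPolynomial (Fin n) K) = 0 := by
  apply MvPolynomial.ext
  intro m
  simp [coeff_Vop]

lemma Vop_monomial_mul (P : ℕ) (hP : 0 < P) (a : Fin n →₀ ℕ) (ρ : K →+* K)
    (hsm : ∀ i, a i < P) (d : Fin n →₀ ℕ) (b : K) (f : MvPolynomial (Fin n) K) :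
    Vop P hP a ρ (monomial (P • d) b * f) = monomial d (ρ b) * Vop P hP a ρ f := by
  apply MvPolynomial.ext
  intro m
  rw [coeff_Vop, coeff_monomial_mul', coeff_monomial_mul']
  by_cases h : d ≤ m
  · have h2 : P • d ≤ P • m + a := by
      rw [Finsupp.le_def]
      intro i
      have hdm := (Finsupp.le_def.mp h) i
      simp only [Finsupp.add_apply, Finsupp.smul_apply, smul_eq_mul]
      have : P * d i ≤ P * m i := Nat.mul_le_mul_left P hdm
      omega
    rw [if_pos h2, if_pos h, map_mul, coeff_Vop]
    have heq : P • m + a - P • d = P • (m - d) + a := by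
      ext i
      have hdm := (Finsupp.le_def.mp h) i
      simp only [Finsupp.tsub_apply, Finsupp.add_apply, Finsupp.smul_apply, smul_eq_mul]
      have h3 : P * (m i - d i) + P * d i = P * m i := by
        rw [← Nat.mul_add, Nat.sub_add_cancel hdm]
      omega
    rw [heq]
  · have h2 : ¬ P • d ≤ P • m + a := by
      intro hc
      apply h
      rw [Finsupp.le_def]
      intro i
      have := (Finsupp.le_def.mp hc) i
      simp only [Finsupp.add_apply, Finsupp.smul_apply, smul_eq_mul] at this
      have hai := hsm i
      by_contra hlt
      push_neg at hlt
      have h4 : P * d i ≥ P * (m i + 1) := Nat.mul_le_mul_left P hlt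
      have h5 : P * (m i + 1) = P * m i + P := by ring
      omega
    rw [if_neg h2, if_neg h, map_zero]

variable [CharP K p]

lemma Vop_pow_mul (k : ℕ) (a : Fin n →₀ ℕ) (ρ : K →+* K) (hP : 0 < p ^ k)
    (hsm : ∀ i, a i < p ^ k) (hρ : ∀ c : K, ρ (c ^ p ^ k) = c)
    (g f : MvPolynomial (Fin n) K) :
    Vop (p ^ k) hP a ρ (g ^ p ^ k * f) = g * Vop (p ^ k) hP a ρ f := by
  induction g using MvPolynomial.induction_on' with
  | monomial d c =>
    rw [monomial_pow, Vop_monomial_mul (p ^ k) hP a ρ hsm, hρ]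
  | add g₁ g₂ ih₁ ih₂ =>
    rw [add_pow_char_pow, add_mul, Vop_add, ih₁, ih₂, add_mul]

lemma Vop_mem_of_mem_span (k : ℕ) (a : Fin n →₀ ℕ) (ρ : K →+* K) (hP : 0 < p ^ k)
    (hsm : ∀ i, a i < p ^ k) (hρ : ∀ c : K, ρ (c ^ p ^ k) = c)
    (J : Ideal (MvPolynomial (Fin n) K)) (f : MvPolynomial (Fin n) K)
    (hf : f ∈ Ideal.span ((fun g => g ^ p ^ k) '' (J : Set (MvPolynomial (Fin n) K)))) :
    Vop (p ^ k) hP a ρ f ∈ J := by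
  have main : ∀ r : MvPolynomial (Fin n) K, Vop (p ^ k) hP a ρ (r * f) ∈ J := by
    refine Submodule.span_induction
      (p := fun x _ => ∀ r : MvPolynomial (Fin n) K, Vop (p ^ k) hP a ρ (r * x) ∈ J)
      ?_ ?_ ?_ ?_ hf
    · rintro x ⟨g, hg, rfl⟩ r
      rw [mul_comm, Vop_pow_mul k a ρ hP hsm hρ]
      exact Ideal.mul_mem_right _ J hg
    · intro r
      rw [mul_zero, Vop_zero]
      exact J.zero_mem
    · intro x y _ _ ihx ihy r
      rw [mul_add, Vop_add]
      exact J.add_mem (ihx r) (ihy r)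
    · intro c x _ ihx r
      rw [smul_eq_mul, ← mul_assoc]
      exact ihx (r * c)
  have := main 1
  rwa [one_mul] at this

lemma Vop_small (P : ℕ) (hP : 0 < P) (a : Fin n →₀ ℕ) (ρ : K →+* K)
    (v : MvPolynomial (Fin n) K) (hv : ∀ m ∈ v.support, ∀ i, m i < P)
    (ha : a ∈ v.support) :
    Vop P hP a ρ v = C (ρ (coeff a v)) := by
  apply MvPolynomial.ext
  intro m
  rw [coeff_Vop, coeff_C]
  by_cases hm : m = 0
  · subst hm
    rw [smul_zero, zero_add, if_pos rfl]
  · rw [if_neg (Ne.symm hm)]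
    have hns : P • m + a ∉ v.support := by
      intro hmem
      obtain ⟨i, hi⟩ := Finsupp.ne_iff.mp hm
      have h1 := hv _ hmem i
      simp only [Finsupp.add_apply, Finsupp.smul_apply, smul_eq_mul, Finsupp.coe_zero,
        Pi.zero_apply] at h1 hi
      have : P * 1 ≤ P * m i := Nat.mul_le_mul_left P (by omega)
      omega
    rw [MvPolynomial.notMem_support_iff.mp hns, map_zero]

variable [PerfectRing K p]

/-- The key "Frobenius purity" lemma: if `v ≠ 0` has all exponents `< p^k` and
`u^(p^k) * v` lies in the ideal generated by `p^k`-th powers of elements of `J`,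
then `u ∈ J`. -/
lemma mem_of_pow_mul_mem (k : ℕ) (J : Ideal (MvPolynomial (Fin n) K))
    (u v : MvPolynomial (Fin n) K) (hv : v ≠ 0)
    (hsm : ∀ m ∈ v.support, ∀ i, m i < p ^ k)
    (h : u ^ p ^ k * v ∈ Ideal.span ((fun g => g ^ p ^ k) '' (J : Set (MvPolynomial (Fin n) K)))) :
    u ∈ J := by
  have hp : p.Prime := Fact.out
  have hP : 0 < p ^ k := pow_pos hp.pos k
  obtain ⟨a, ha⟩ := MvPolynomial.support_nonempty.mpr hv
  set ρ : K →+* K := ((iterateFrobeniusEquiv K p k).symm : K →+* K) with hρdef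
  have hρ : ∀ c : K, ρ (c ^ p ^ k) = c := by
    intro c
    have hcc : (iterateFrobeniusEquiv K p k) c = c ^ p ^ k := iterateFrobeniusEquiv_def K p k c
    rw [hρdef]
    show (iterateFrobeniusEquiv K p k).symm (c ^ p ^ k) = c
    rw [← hcc, RingEquiv.symm_apply_apply]
  have h1 : Vop (p ^ k) hP a ρ (u ^ p ^ k * v) ∈ J :=
    Vop_mem_of_mem_span k a ρ hP (hsm a ha) hρ J _ h
  rw [Vop_pow_mul k a ρ hP (hsm a ha) hρ, Vop_small (p ^ k) hP a ρ v hsm ha] at h1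
  have hc : coeff a v ≠ 0 := MvPolynomial.mem_support_iff.mp ha
  have hρc : ρ (coeff a v) ≠ 0 := by
    intro h0
    apply hc
    have h2 := (iterateFrobeniusEquiv K p k).symm.injective (a₁ := coeff a v) (a₂ := 0)
    rw [map_zero] at h2
    exact h2 h0
  have h2 := Ideal.mul_mem_right (C (ρ (coeff a v))⁻¹) J h1
  rwa [mul_assoc, ← C_mul, mul_inv_cancel₀ hρc, C_1, mul_one] at h2

end FT

section FP

variable {p : ℕ} [Fact p.Prime] {R : Type*} [CommRing R] [CharP R p]

lemma FT.frobeniusPower_eq_map (e : ℕ) (J : Ideal R) :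
    frobeniusPower p e J = Ideal.map (iterateFrobenius R p e) J := by
  haveI : ExpChar R p := ExpChar.prime Fact.out
  unfold frobeniusPower Ideal.map
  congr 1

lemma FT.frobeniusPower_comp (e k : ℕ) (J : Ideal R) :
    frobeniusPower p (e + k) J
      = Ideal.span ((fun g => g ^ p ^ k) '' ((frobeniusPower p e J : Set R))) := by
  haveI : ExpChar R p := ExpChar.prime Fact.out
  have h2 : Ideal.span ((fun g => g ^ p ^ k) '' ((frobeniusPower p e J : Set R)))
      = Ideal.map (iterateFrobenius R p k) (frobeniusPower p e J) := by
    unfold Ideal.map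
    congr 1
  rw [h2, FT.frobeniusPower_eq_map, FT.frobeniusPower_eq_map, Ideal.map_map]
  congr 1
  rw [← iterateFrobenius_add]
  congr 1
  omega

omit [CharP R p] in
lemma FT.frobeniusPower_le (e : ℕ) (J : Ideal R) : frobeniusPower p e J ≤ J := by
  have hp : p.Prime := Fact.out
  rw [frobeniusPower, Ideal.span_le]
  rintro _ ⟨g, hg, rfl⟩
  exact Ideal.pow_mem_of_mem J hg _ (pow_pos hp.pos e)

omit [Fact p.Prime] [CharP R p] in
lemma FT.span_finset_pow_le (Q : ℕ) (S : Finset R) :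
    (Ideal.span (S : Set R)) ^ (S.card * Q + 1) ≤ Ideal.span ((fun x => x ^ Q) '' (S : Set R)) := by
  classical
  induction S using Finset.induction_on with
  | empty =>
    simp only [Finset.coe_empty, Ideal.span_empty, Finset.card_empty, Nat.zero_mul, zero_add,
      pow_one]
    exact bot_le
  | @insert b S hb ih =>
    rw [Finset.card_insert_of_notMem hb, Finset.coe_insert, Ideal.span_insert]
    have hexp : (S.card + 1) * Q + 1 = Q + (S.card * Q + 1) := by ring
    rw [hexp]
    refine le_trans Ideal.sup_pow_add_le_pow_sup_pow (sup_le ?_ ?_)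
    · rw [Ideal.span_singleton_pow]
      apply Ideal.span_le.mpr
      rintro x hx
      rw [Set.mem_singleton_iff] at hx
      subst hx
      exact Ideal.subset_span ⟨b, by simp, rfl⟩
    · refine le_trans ih (Ideal.span_mono ?_)
      exact Set.image_mono (by simp)

end FP

end Aux

/-- Let `K` be a perfect field of characteristic `p`, `R = K[x₁,…,xₙ]`,
and `𝔞, I` ideals with `R ⊋ √𝔞 ⊇ I` and `I ≠ 0`. Then `(ν^𝔞_I(p^e)/p^e)` converges to a
real number `c^𝔞(I)`, and `ν^𝔞_I(p^e)/p^e < c^𝔞(I)` for every `e`. -/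
theorem nuInv_tendsto_FThreshold (p : ℕ) [Fact p.Prime] (K : Type*) [Field K] [CharP K p]
    [PerfectRing K p] (n : ℕ)
    (I 𝔞 : Ideal (MvPolynomial (Fin n) K))
    (hrad : I ≤ 𝔞.radical) (hproper : 𝔞.radical ≠ ⊤) (hI : I ≠ ⊥) :
    ∃ c : ℝ, Tendsto (fun e : ℕ => (nuInv p 𝔞 I e : ℝ) / (p : ℝ) ^ e) atTop (nhds c) ∧
      ∀ e : ℕ, (nuInv p 𝔞 I e : ℝ) / (p : ℝ) ^ e < c := by
  classical
  have hp : p.Prime := Fact.out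
  obtain ⟨s, hs⟩ : ∃ s, I ^ s ≤ 𝔞 :=
    Ideal.exists_pow_le_of_le_radical_of_fg hrad (IsNoetherian.noetherian I)
  obtain ⟨S, hS⟩ := IsNoetherian.noetherian 𝔞
  set ν : ℕ → ℕ := fun e => nuInv p 𝔞 I e with hν
  set N : ℕ → ℕ := fun e => s * (S.card * p ^ e + 1) with hN
  have hNle : ∀ e, I ^ (N e) ≤ frobeniusPower p e 𝔞 := by
    intro e
    have h1 : 𝔞 ^ (S.card * p ^ e + 1) ≤ frobeniusPower p e 𝔞 := by
      rw [← hS]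
      refine le_trans (FT.span_finset_pow_le (p ^ e) S) (Ideal.span_mono ?_)
      exact Set.image_mono Submodule.subset_span
    calc I ^ (N e) = (I ^ s) ^ (S.card * p ^ e + 1) := by rw [← pow_mul]
    _ ≤ 𝔞 ^ (S.card * p ^ e + 1) := Ideal.pow_right_mono hs _
    _ ≤ frobeniusPower p e 𝔞 := h1
  have hBne : ∀ e, frobeniusPower p e 𝔞 ≠ ⊤ := by
    intro e htop
    apply hproper
    rw [Ideal.radical_eq_top]
    exact top_le_iff.mp (htop ▸ FT.frobeniusPower_le e 𝔞)
  have h0mem : ∀ e, (0 : ℕ) ∈ {m : ℕ | ¬ I ^ m ≤ frobeniusPower p e 𝔞} := by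
    intro e
    simp only [Set.mem_setOf_eq, pow_zero, Ideal.one_eq_top]
    intro hle
    exact hBne e (top_le_iff.mp hle)
  have hbddS : ∀ e, BddAbove {m : ℕ | ¬ I ^ m ≤ frobeniusPower p e 𝔞} := by
    intro e
    refine ⟨N e, fun m hm => ?_⟩
    by_contra hlt
    push_neg at hlt
    exact hm (le_trans (Ideal.pow_le_pow_right hlt.le) (hNle e))
  have hν_mem : ∀ e, ¬ I ^ (ν e) ≤ frobeniusPower p e 𝔞 :=
    fun e => Nat.sSup_mem ⟨0, h0mem e⟩ (hbddS e)
  have hν_ub : ∀ e m, ¬ I ^ m ≤ frobeniusPower p e 𝔞 → m ≤ ν e :=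
    fun e m hm => le_csSup (hbddS e) hm
  have hν_le : ∀ e, ν e ≤ N e := by
    intro e
    by_contra h
    push_neg at h
    exact hν_mem e (le_trans (Ideal.pow_le_pow_right h.le) (hNle e))
  -- growth lemmas
  have hcomp : ∀ e k : ℕ, frobeniusPower p (e + k) 𝔞
      = Ideal.span ((fun g => g ^ p ^ k) ''
        ((frobeniusPower p e 𝔞 : Set (MvPolynomial (Fin n) K)))) :=
    fun e k => FT.frobeniusPower_comp e k 𝔞
  have hgrow : ∀ e k (v : MvPolynomial (Fin n) K), v ∈ I → v ≠ 0 →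
      (∀ m ∈ v.support, ∀ i, m i < p ^ k) →
      p ^ k * ν e + 1 ≤ ν (e + k) := by
    intro e k v hvI hv0 hsm
    obtain ⟨u, huI, huB⟩ := SetLike.not_le_iff_exists.mp (hν_mem e)
    apply hν_ub
    intro hle
    apply huB
    refine FT.mem_of_pow_mul_mem k (frobeniusPower p e 𝔞) u v hv0 hsm ?_
    rw [← hcomp e k]
    apply hle
    rw [pow_succ]
    refine Ideal.mul_mem_mul ?_ hvI
    rw [mul_comm, pow_mul]
    exact Ideal.pow_mem_pow huI _
  have hgrow0 : ∀ e k, p ^ k * ν e ≤ ν (e + k) := by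
    intro e k
    obtain ⟨u, huI, huB⟩ := SetLike.not_le_iff_exists.mp (hν_mem e)
    apply hν_ub
    intro hle
    apply huB
    have hsm1 : ∀ m ∈ (1 : MvPolynomial (Fin n) K).support, ∀ i : Fin n, m i < p ^ k := by
      intro m hm i
      classical
      have h1 := MvPolynomial.mem_support_iff.mp hm
      rw [MvPolynomial.coeff_one] at h1
      have hm0 : m = 0 := by
        by_contra hne
        exact h1 (if_neg (fun h => hne h.symm))
      subst hm0
      simp only [Finsupp.coe_zero, Pi.zero_apply]
      exact pow_pos hp.pos k
    refine FT.mem_of_pow_mul_mem k (frobeniusPower p e 𝔞) u 1 one_ne_zero hsm1 ?_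
    rw [mul_one, ← hcomp e k]
    apply hle
    rw [mul_comm, pow_mul]
    exact Ideal.pow_mem_pow huI _
  -- analysis
  set a : ℕ → ℝ := fun e => (ν e : ℝ) / (p : ℝ) ^ e with ha
  have hp1 : (1 : ℝ) < (p : ℝ) := by exact_mod_cast hp.one_lt
  have hppos : (0 : ℝ) < (p : ℝ) := zero_lt_one.trans hp1
  have hpow : ∀ e : ℕ, (0 : ℝ) < (p : ℝ) ^ e := fun e => pow_pos hppos e
  have hmono : Monotone a := by
    apply monotone_nat_of_le_succ
    intro e
    have h1 : (p : ℝ) * (ν e : ℝ) ≤ (ν (e + 1) : ℝ) := by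
      have h2 := hgrow0 e 1
      rw [pow_one] at h2
      exact_mod_cast h2
    have h3 : a e = ((p : ℝ) * (ν e : ℝ)) / (p : ℝ) ^ (e + 1) := by
      simp only [ha]
      rw [pow_succ', mul_div_mul_left _ _ (ne_of_gt hppos)]
    have h4 : a (e + 1) = ((ν (e + 1) : ℕ) : ℝ) / (p : ℝ) ^ (e + 1) := by
      simp only [ha]
    rw [h3, h4]
    gcongr
  have hbound : ∀ e, a e ≤ ((s * (S.card + 1) : ℕ) : ℝ) := by
    intro e
    have h0 : a e = ((ν e : ℕ) : ℝ) / (p : ℝ) ^ e := by simp only [ha]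
    rw [h0, div_le_iff₀ (hpow e)]
    have h1 : (ν e : ℝ) ≤ (N e : ℝ) := by exact_mod_cast hν_le e
    refine le_trans h1 ?_
    have h2 : N e ≤ s * (S.card + 1) * p ^ e := by
      have hpe : 1 ≤ p ^ e := Nat.one_le_pow _ _ hp.pos
      have h3 : S.card * p ^ e + 1 ≤ (S.card + 1) * p ^ e := by
        have h5 : S.card * p ^ e + 1 ≤ S.card * p ^ e + p ^ e := by omega
        calc S.card * p ^ e + 1 ≤ S.card * p ^ e + p ^ e := h5
        _ = (S.card + 1) * p ^ e := by ring
      calc N e = s * (S.card * p ^ e + 1) := rfl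
      _ ≤ s * ((S.card + 1) * p ^ e) := Nat.mul_le_mul_left s h3
      _ = s * (S.card + 1) * p ^ e := by ring
    have h6 : (N e : ℝ) ≤ ((s * (S.card + 1) * p ^ e : ℕ) : ℝ) := by exact_mod_cast h2
    refine le_trans h6 (le_of_eq ?_)
    push_cast
    ring
  have hbddR : BddAbove (Set.range a) := ⟨_, by rintro _ ⟨e, rfl⟩; exact hbound e⟩
  refine ⟨⨆ e, a e, tendsto_atTop_ciSup hmono hbddR, ?_⟩
  intro e
  obtain ⟨v, hvI, hv0⟩ := Submodule.exists_mem_ne_zero_of_ne_bot hI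
  set D := v.support.sup (fun m => m.support.sup m) with hD
  set k := D + 1 with hk
  have hsm : ∀ m ∈ v.support, ∀ i, m i < p ^ k := by
    intro m hm i
    have h1 : m i ≤ D := by
      by_cases hi : i ∈ m.support
      · exact le_trans (Finset.le_sup hi) (Finset.le_sup (f := fun m => m.support.sup ⇑m) hm)
      · rw [Finsupp.notMem_support_iff.mp hi]
        exact Nat.zero_le D
    calc m i ≤ D := h1
    _ < 2 ^ k := by
      calc D < 2 ^ D := Nat.lt_two_pow_self
      _ ≤ 2 ^ k := Nat.pow_le_pow_right (by norm_num) (by omega)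
    _ ≤ p ^ k := Nat.pow_le_pow_left hp.two_le k
  have hstep := hgrow e k v hvI hv0 hsm
  have hlt : a e < a (e + k) := by
    have h4 : a (e + k) = ((ν (e + k) : ℕ) : ℝ) / (p : ℝ) ^ (e + k) := by simp only [ha]
    have h2 : ((p ^ k * ν e + 1 : ℕ) : ℝ) / (p : ℝ) ^ (e + k) ≤ a (e + k) := by
      rw [h4]
      gcongr
    refine lt_of_lt_of_le ?_ h2
    have h0 : a e = ((ν e : ℕ) : ℝ) / (p : ℝ) ^ e := by simp only [ha]
    rw [h0, div_lt_div_iff₀ (hpow e) (hpow (e + k))]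
    push_cast
    rw [pow_add]
    nlinarith [hpow e, hpow k, Nat.cast_nonneg (ν e) (α := ℝ)]
  exact lt_of_lt_of_le hlt (le_ciSup hbddR (e + k))
end

section
/- Fix a prime p and e ∈ ℕ. For x ∈ ℤ_p let tr_e(x) ∈ {0,…,p^e−1} be the unique integer with x ≡ tr_e(x) (mod p^e ℤ_p), and for k ∈ {0,…,p^e−1} define B_k : ℤ_p → 𝔽_p by B_k(x) = C(tr_e(x), k) mod p, where C(·,·) is the binomial coefficient. Then the family (B_k)_{k=0}^{p^e−1} is a basis of the 𝔽_p-vector space of all functions F : ℤ_p → 𝔽_p satisfying F(x) = F(y) whenever x − y ∈ p^e ℤ_p (every such function is continuous, 𝔽_p being discrete). -/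
/-- The `𝔽_p`-vector space of functions `ℤ_p → 𝔽_p` that are constant on cosets of
`p^e ℤ_p` (every such function is continuous, `𝔽_p` being discrete). -/
def levelCts (p : ℕ) [Fact p.Prime] (e : ℕ) : Submodule (ZMod p) (PadicInt p → ZMod p) where
  carrier := {F | ∀ x y : PadicInt p, (p : PadicInt p) ^ e ∣ x - y → F x = F y}
  add_mem' := by
    intro F G hF hG x y h
    simp only [Pi.add_apply, hF x y h, hG x y h]
  zero_mem' := by intro x y _; rfl
  smul_mem' := by
    intro c F hF x y h
    simp only [Pi.smul_apply, hF x y h]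

/-- The function `B_k : ℤ_p → 𝔽_p`, `x ↦ C(tr_e(x), k) mod p`, where `tr_e(x)` is the
unique integer in `{0,…,p^e−1}` congruent to `x` modulo `p^e ℤ_p`. -/
noncomputable def binomFun (p : ℕ) [Fact p.Prime] (e : ℕ) (k : Fin (p ^ e)) :
    PadicInt p → ZMod p :=
  fun x => ((x.appr e).choose (k : ℕ) : ZMod p)

section Aux

variable (p : ℕ) [Fact p.Prime] (e : ℕ)

lemma appr_eq_of_dvd {x y : PadicInt p} (h : (p : PadicInt p) ^ e ∣ x - y) :
    x.appr e = y.appr e := by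
  have hx := PadicInt.appr_spec e x
  have hy : x - (y.appr e : PadicInt p) ∈ Ideal.span {(p : PadicInt p) ^ e} := by
    have hy' := PadicInt.appr_spec e y
    rw [Ideal.mem_span_singleton] at hy' ⊢
    have hxy : x - (y.appr e : PadicInt p) = (x - y) + (y - y.appr e) := by ring
    rw [hxy]; exact dvd_add h hy'
  have hcast : ((x.appr e : ZMod (p ^ e))) = (y.appr e : ZMod (p ^ e)) :=
    PadicInt.zmod_congr_of_sub_mem_span e x _ _ hx hy
  calc x.appr e = ((x.appr e : ZMod (p ^ e))).val := (ZMod.val_cast_of_lt (x.appr_lt e)).symm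
    _ = ((y.appr e : ZMod (p ^ e))).val := by rw [hcast]
    _ = y.appr e := ZMod.val_cast_of_lt (y.appr_lt e)

lemma appr_natCast (n : ℕ) (hn : n < p ^ e) : ((n : PadicInt p)).appr e = n := by
  have hx := PadicInt.appr_spec e (n : PadicInt p)
  have hy : (n : PadicInt p) - (n : PadicInt p) ∈ Ideal.span {(p : PadicInt p) ^ e} := by
    simp
  have hcast := PadicInt.zmod_congr_of_sub_mem_span e (n : PadicInt p) _ _ hx hy
  calc ((n : PadicInt p)).appr e
      = ((((n : PadicInt p)).appr e : ZMod (p ^ e))).val :=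
        (ZMod.val_cast_of_lt ((n : PadicInt p).appr_lt e)).symm
    _ = ((n : ZMod (p ^ e))).val := by rw [hcast]
    _ = n := ZMod.val_cast_of_lt hn

/-- The evaluated family: `k ↦ (n ↦ C(n,k) mod p)`. -/
def chooseFam : Fin (p ^ e) → (Fin (p ^ e) → ZMod p) :=
  fun k n => ((n : ℕ).choose (k : ℕ) : ZMod p)

lemma chooseFam_li : LinearIndependent (ZMod p) (chooseFam p e) := by
  rw [Fintype.linearIndependent_iff]
  intro g hg
  have key : ∀ m : ℕ, ∀ k : Fin (p ^ e), (k : ℕ) = m → g k = 0 := by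
    intro m
    induction m using Nat.strong_induction_on with
    | _ m ih =>
      intro k hk
      have hgk := congrFun hg k
      simp only [Finset.sum_apply, Pi.smul_apply, chooseFam, smul_eq_mul,
        Pi.zero_apply] at hgk
      rw [Finset.sum_eq_single k] at hgk
      · simpa using hgk
      · intro j _ hj
        rcases lt_or_gt_of_ne (fun h : (j : ℕ) = (k : ℕ) => hj (Fin.ext h)) with h | h
        · rw [ih (j : ℕ) (hk ▸ h) j rfl, zero_mul]
        · rw [Nat.choose_eq_zero_of_lt h]; simp
      · intro h; exact absurd (Finset.mem_univ k) h
  exact fun k => key (k : ℕ) k rfl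

lemma chooseFam_span : Submodule.span (ZMod p) (Set.range (chooseFam p e)) = ⊤ := by
  have hcard : Fintype.card (Fin (p ^ e)) =
      Module.finrank (ZMod p) (Fin (p ^ e) → ZMod p) := by simp
  rw [← coe_basisOfLinearIndependentOfCardEqFinrank (chooseFam_li p e) hcard]
  exact Module.Basis.span_eq _

/-- The evaluation map at the points `0, 1, …, p^e − 1`. -/
noncomputable def evMap : (PadicInt p → ZMod p) →ₗ[ZMod p] (Fin (p ^ e) → ZMod p) where
  toFun F := fun n => F ((n : ℕ) : PadicInt p)
  map_add' := by intros; rfl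
  map_smul' := by intros; rfl

lemma evMap_binomFun : evMap p e ∘ binomFun p e = chooseFam p e := by
  funext k n
  simp only [evMap, binomFun, chooseFam, Function.comp_apply, LinearMap.coe_mk,
    AddHom.coe_mk]
  rw [appr_natCast p e (n : ℕ) n.isLt]

lemma binomFun_mem (k : Fin (p ^ e)) : binomFun p e k ∈ levelCts p e := by
  intro x y h
  simp only [binomFun, appr_eq_of_dvd p e h]

lemma evMap_injOn {F G : PadicInt p → ZMod p} (hF : F ∈ levelCts p e)
    (hG : G ∈ levelCts p e) (h : evMap p e F = evMap p e G) : F = G := by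
  funext x
  have hspec := PadicInt.appr_spec e x
  rw [Ideal.mem_span_singleton] at hspec
  have hx : F x = F ((x.appr e : ℕ) : PadicInt p) := hF x _ hspec
  have hy : G x = G ((x.appr e : ℕ) : PadicInt p) := hG x _ hspec
  have := congrFun h (⟨x.appr e, x.appr_lt e⟩ : Fin (p ^ e))
  simp only [evMap, LinearMap.coe_mk, AddHom.coe_mk] at this
  rw [hx, hy]
  exact this

end Aux

/-- Fix a prime `p` and `e ∈ ℕ`. The family `(B_k)_{k=0}^{p^e−1}` of
functions `B_k(x) = C(tr_e(x), k) mod p` is a basis of the `𝔽_p`-vector space of all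
functions `F : ℤ_p → 𝔽_p` with `F(x) = F(y)` whenever `x − y ∈ p^e ℤ_p`. -/
theorem binomFun_isBasis (p : ℕ) [Fact p.Prime] (e : ℕ) :
    (∀ k : Fin (p ^ e), binomFun p e k ∈ levelCts p e) ∧
    LinearIndependent (ZMod p) (binomFun p e) ∧
    Submodule.span (ZMod p) (Set.range (binomFun p e)) = levelCts p e := by
  refine ⟨binomFun_mem p e, ?_, ?_⟩
  · apply LinearIndependent.of_comp (evMap p e)
    rw [evMap_binomFun p e]
    exact chooseFam_li p e
  · apply le_antisymm
    · rw [Submodule.span_le]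
      rintro _ ⟨k, rfl⟩
      exact binomFun_mem p e k
    · intro F hF
      -- write `evMap F` in the basis `chooseFam`
      have hcard : Fintype.card (Fin (p ^ e)) =
          Module.finrank (ZMod p) (Fin (p ^ e) → ZMod p) := by simp
      set b := basisOfLinearIndependentOfCardEqFinrank (chooseFam_li p e) hcard with hb
      have hbcoe : ⇑b = chooseFam p e :=
        coe_basisOfLinearIndependentOfCardEqFinrank _ _
      set c := b.repr (evMap p e F) with hc
      set G : PadicInt p → ZMod p := ∑ k, c k • binomFun p e k with hGdef
      have hGmem : G ∈ levelCts p e := by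
        rw [hGdef]
        exact Submodule.sum_mem _ fun k _ => Submodule.smul_mem _ _ (binomFun_mem p e k)
      have hevG : evMap p e G = evMap p e F := by
        rw [hGdef, map_sum]
        have : ∀ k, evMap p e (c k • binomFun p e k) = c k • chooseFam p e k := by
          intro k
          rw [map_smul, ← congrFun (evMap_binomFun p e) k]
          rfl
        simp only [this]
        calc ∑ k, c k • chooseFam p e k = ∑ k, c k • b k := by simp [hbcoe]
          _ = evMap p e F := b.sum_repr (evMap p e F)
      have hFG : F = G := evMap_injOn p e hF hGmem hevG.symm
      rw [hFG, hGdef]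
      exact Submodule.sum_mem _ fun k _ =>
        Submodule.smul_mem _ _ (Submodule.subset_span ⟨k, rfl⟩)
end

section
/- Let M be a module over the ring C⁰(ℤ_p,𝔽_p) of continuous functions ℤ_p → 𝔽_p, and suppose the set of p-adic integers x with M_x = M/𝓘(x)M ≠ 0 is finite, say equal to {x₁,…,x_n} with the x_i pairwise distinct. Then V(ann M) = {x₁,…,x_n}, where ann M is the annihilator of M in C⁰(ℤ_p,𝔽_p). -/
/-- `𝔽_p = ZMod p` carries the discrete topology. -/
instance (p : ℕ) : TopologicalSpace (ZMod p) := ⊥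

instance (p : ℕ) : DiscreteTopology (ZMod p) := ⟨rfl⟩

/-- For `x ∈ ℤ_p`, the maximal ideal `𝓘(x) = {F ∈ C⁰(ℤ_p, 𝔽_p) : F(x) = 0}` of the
ring of continuous functions `ℤ_p → 𝔽_p`. -/
noncomputable def evalIdeal (p : ℕ) [Fact p.Prime] (x : PadicInt p) : Ideal C(PadicInt p, ZMod p) :=
  RingHom.ker ((Pi.evalRingHom (fun _ : PadicInt p => ZMod p) x).comp
    (ContinuousMap.coeFnRingHom))

/-! A point `x` lies in `V(ann M)` iff `ann M ⊆ 𝓘(x)`. If `M_x ≠ 0`, this is forced by the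
maximality of `𝓘(x)`. Conversely, let `x ∉ s` and let `e` be the indicator of a clopen
neighbourhood `U` of `x` missing `s`. Every `F ∈ 𝓘(y)` is killed by the indicator of its clopen
zero set, so `M_y = 0` means that every element of `M` is killed by a function not vanishing at
`y`; for `y ∉ U` the function `1 - e` kills `e • m`. By compactness these local annihilators of
`e • m` generate the unit ideal, so `e ∈ ann M`, while `e x = 1`. -/

theorem Module.annihilator_le_of_smul_top_ne_top {R M : Type*} [CommRing R] [AddCommGroup M]
    [Module R M] {I : Ideal R} [hI : I.IsMaximal] (h : I • (⊤ : Submodule R M) ≠ ⊤) :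
    Module.annihilator R M ≤ I := by
  by_contra hle
  have hsup : I ⊔ Module.annihilator R M = ⊤ := by
    by_contra hne
    exact hle (le_sup_right.trans (hI.eq_of_le hne le_sup_left).ge)
  refine h ?_
  have hann : Module.annihilator R M • (⊤ : Submodule R M) = ⊥ := by
    rw [← Submodule.le_annihilator_iff, Submodule.annihilator_top]
  calc I • (⊤ : Submodule R M) = (I ⊔ Module.annihilator R M) • ⊤ := by
        rw [Submodule.sup_smul, hann, sup_bot_eq]
    _ = ⊤ := by rw [hsup, Submodule.top_smul]

theorem Submodule.exists_notMem_smul_eq_zero_of_mem_smul_top {R M : Type*} [CommRing R]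
    [AddCommGroup M] [Module R M] {P : Ideal R} [P.IsPrime]
    (hP : ∀ g ∈ P, ∃ f ∉ P, f * g = 0) {n : M} (hn : n ∈ P • (⊤ : Submodule R M)) :
    ∃ f ∉ P, f • n = 0 := by
  refine Submodule.smul_induction_on hn ?_ ?_
  · intro g hg m _
    obtain ⟨f, hfP, hfg⟩ := hP g hg
    exact ⟨f, hfP, by rw [← mul_smul, hfg, zero_smul]⟩
  · rintro n₁ n₂ ⟨f₁, hf₁, e₁⟩ ⟨f₂, hf₂, e₂⟩
    refine ⟨f₁ * f₂, fun h => (Ideal.IsPrime.mem_or_mem ‹_› h).elim hf₁ hf₂, ?_⟩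
    rw [smul_add, mul_smul, mul_smul, smul_comm f₁ f₂ n₁, e₁, e₂, smul_zero, smul_zero, add_zero]

namespace ContinuousMap

variable {X K : Type*} [TopologicalSpace X] [TopologicalSpace K] [DiscreteTopology K]

theorem exists_apply_eq_one_mul_eq_zero [Semiring K] {g : C(X, K)} {x : X}
    (hgx : g x = 0) : ∃ f : C(X, K), f x = 1 ∧ f * g = 0 := by
  classical
  refine ⟨(⟨fun k => if k = 0 then 1 else 0, continuous_of_discreteTopology⟩ : C(K, K)).comp g,
    by simp [hgx], ?_⟩
  ext z
  by_cases hz : g z = 0 <;> simp [hz]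

theorem ideal_eq_top_of_forall_exists_apply_ne_zero [CompactSpace X] [Field K] {J : Ideal C(X, K)}
    (h : ∀ x, ∃ f ∈ J, f x ≠ 0) : J = ⊤ := by
  choose f hfJ hfx using h
  set g : X → C(X, K) := fun y => const X (f y y)⁻¹ * f y
  have hgJ : ∀ y, g y ∈ J := fun y => J.mul_mem_left _ (hfJ y)
  have hgy : ∀ y, g y y = 1 := fun y => by simp [g, inv_mul_cancel₀ (hfx y)]
  obtain ⟨T, hT⟩ := isCompact_univ.elim_finite_subcover (fun y => g y ⁻¹' {1})
    (fun y => (isOpen_discrete _).preimage (g y).continuous)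
    (fun z _ => Set.mem_iUnion.mpr ⟨z, hgy z⟩)
  have hprod : ∏ y ∈ T, (1 - g y) = 0 := by
    ext z
    obtain ⟨y, hyT, hy⟩ : ∃ y ∈ T, g y z = 1 := by simpa using hT (Set.mem_univ z)
    simpa using Finset.prod_eq_zero hyT (by simp [hy])
  have := congrArg (Ideal.Quotient.mk J) hprod
  simp only [map_prod, map_sub, map_one, (Ideal.Quotient.eq_zero_iff_mem).mpr (hgJ _), sub_zero,
    Finset.prod_const_one, map_zero] at this
  exact Ideal.Quotient.zero_eq_one_iff.mp this.symm

theorem mem_annihilator_of_isIdempotentElem [CompactSpace X] [Field K] {M : Type*}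
    [AddCommGroup M] [Module C(X, K) M] {e : C(X, K)} (he : IsIdempotentElem e)
    (hM : ∀ y, e y ≠ 0 → ∀ n : M, ∃ f : C(X, K), f y ≠ 0 ∧ f • n = 0) :
    e ∈ Module.annihilator C(X, K) M := by
  rw [Module.mem_annihilator]
  intro m
  suffices h : (Submodule.span C(X, K) {e • m}).annihilator = ⊤ by
    rwa [Submodule.annihilator_eq_top_iff, Submodule.span_singleton_eq_bot] at h
  refine ideal_eq_top_of_forall_exists_apply_ne_zero fun y => ?_
  simp only [Submodule.mem_annihilator_span_singleton]
  by_cases hy : e y = 0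
  · refine ⟨1 - e, ?_, by simp [hy]⟩
    rw [← mul_smul, sub_mul, one_mul, he.eq, sub_self, zero_smul]
  · obtain ⟨f, hfy, hf⟩ := hM y hy (e • m)
    exact ⟨f, hf, hfy⟩

theorem exists_isIdempotentElem_apply_eq_one_of_isOpen [CompactSpace X] [T2Space X]
    [TotallyDisconnectedSpace X] [Semiring K] {W : Set X} (hW : IsOpen W) {x : X} (hx : x ∈ W) :
    ∃ e : C(X, K), IsIdempotentElem e ∧ e x = 1 ∧ ∀ y, e y ≠ 0 → y ∈ W := by
  obtain ⟨U, hU, hxU, hUW⟩ := isTopologicalBasis_isClopen.isOpen_iff.mp hW x hx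
  refine ⟨LocallyConstant.charFn K hU, ?_, by simp [LocallyConstant.coe_charFn, hxU], ?_⟩
  · ext z
    by_cases hz : z ∈ U <;> simp [LocallyConstant.coe_charFn, hz]
  · intro y hy
    by_contra hyW
    have hyU : y ∉ U := fun h => hyW (hUW h)
    exact hy (by simp [LocallyConstant.coe_charFn, hyU])

end ContinuousMap

section evalIdeal

variable {p : ℕ} [Fact p.Prime]

theorem mem_evalIdeal_iff {x : PadicInt p} {F : C(PadicInt p, ZMod p)} :
    F ∈ evalIdeal p x ↔ F x = 0 :=
  RingHom.mem_ker

instance evalIdeal_isMaximal (x : PadicInt p) : (evalIdeal p x).IsMaximal :=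
  RingHom.ker_isMaximal_of_surjective _ fun k => ⟨ContinuousMap.const _ k, rfl⟩

theorem exists_apply_ne_zero_smul_eq_zero_of_mem_evalIdeal_smul_top {M : Type*} [AddCommGroup M]
    [Module C(PadicInt p, ZMod p) M] {y : PadicInt p} {n : M}
    (hn : n ∈ evalIdeal p y • (⊤ : Submodule C(PadicInt p, ZMod p) M)) :
    ∃ f : C(PadicInt p, ZMod p), f y ≠ 0 ∧ f • n = 0 := by
  have hkill : ∀ g ∈ evalIdeal p y, ∃ f ∉ evalIdeal p y, f * g = 0 := fun g hg => by
    obtain ⟨f, hf1, hfg⟩ := ContinuousMap.exists_apply_eq_one_mul_eq_zero (mem_evalIdeal_iff.mp hg)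
    exact ⟨f, by simp [mem_evalIdeal_iff, hf1], hfg⟩
  obtain ⟨f, hf, hfn⟩ := Submodule.exists_notMem_smul_eq_zero_of_mem_smul_top hkill hn
  exact ⟨f, mt mem_evalIdeal_iff.mpr hf, hfn⟩

end evalIdeal

/-- Let `M` be a module over `C⁰(ℤ_p, 𝔽_p)` such that the set of `x ∈ ℤ_p`
with `M_x = M/𝓘(x)M ≠ 0` is finite, equal to `{x₁,…,xₙ}` (a finset `s`). Then
`V(ann M) = {x₁,…,xₙ}`. -/
theorem zeroSet_annihilator_eq (p : ℕ) [Fact p.Prime]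
    (M : Type*) [AddCommGroup M] [Module C(PadicInt p, ZMod p) M]
    (s : Finset (PadicInt p))
    (hs : ∀ x : PadicInt p,
      (evalIdeal p x • (⊤ : Submodule C(PadicInt p, ZMod p) M) ≠ ⊤) ↔ x ∈ s) :
    {x : PadicInt p | ∀ F ∈ Module.annihilator C(PadicInt p, ZMod p) M, F x = 0}
      = (s : Set (PadicInt p)) := by
  ext x
  refine ⟨fun hx => ?_, fun hxs F hF => ?_⟩
  · by_contra hxs
    obtain ⟨e, he, hex, hes⟩ := ContinuousMap.exists_isIdempotentElem_apply_eq_one_of_isOpen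
      (K := ZMod p) s.finite_toSet.isClosed.isOpen_compl hxs
    have hann : e ∈ Module.annihilator _ M := by
      refine ContinuousMap.mem_annihilator_of_isIdempotentElem he fun y hy n => ?_
      have htop : evalIdeal p y • (⊤ : Submodule _ M) = ⊤ := not_not.mp (mt (hs y).mp (hes y hy))
      exact exists_apply_ne_zero_smul_eq_zero_of_mem_evalIdeal_smul_top
        (htop.symm ▸ Submodule.mem_top)
    exact one_ne_zero (hex ▸ hx e hann)
  · exact mem_evalIdeal_iff.mp
      (Module.annihilator_le_of_smul_top_ne_top ((hs x).mpr hxs) hF)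
end

section
/- Let M be a module over the ring C⁰(ℤ_p,𝔽_p) of continuous functions ℤ_p → 𝔽_p, and suppose the set of p-adic integers x with M_x = M/𝓘(x)M ≠ 0 is finite, say equal to {x₁,…,x_n} with the x_i pairwise distinct. Then M is the internal direct sum of the submodules M_(x₁),…,M_(x_n), where M_(x) = {u ∈ M : 𝓘(x)·u = 0}, and for each i there is an isomorphism of C⁰(ℤ_p,𝔽_p)-modules M_(x_i) ≅ M_{x_i}. -/
noncomputable instance (p : ℕ) [Fact p.Prime] : DecidableEq (PadicInt p) :=
  Classical.decEq _

/-- `M_(x) = {u ∈ M : 𝓘(x)·u = 0}`, a submodule of `M`. -/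
def eigenSubmodule (p : ℕ) [Fact p.Prime]
    (M : Type*) [AddCommGroup M] [Module C(PadicInt p, ZMod p) M] (x : PadicInt p) :
    Submodule C(PadicInt p, ZMod p) M where
  carrier := {u | ∀ F ∈ evalIdeal p x, F • u = 0}
  add_mem' := by
    intro u v hu hv F hF
    rw [smul_add, hu F hF, hv F hF, add_zero]
  zero_mem' := by intro F _; exact smul_zero F
  smul_mem' := by
    intro c u hu F hF
    rw [smul_comm, hu F hF, smul_zero]

/-!
Since `𝔽_p` is discrete, every `F ∈ 𝓘(y)` vanishes on a clopen neighbourhood of `y`, so each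
element of `𝓘(y)M` is killed by some `G` with `G y = 1`. Off `s` this applies to every `u ∈ M`,
and by compactness of `ℤ_p` finitely many such `G` cover the support of any `F` vanishing on `s`;
hence such an `F` kills `M`, i.e. `C⁰(ℤ_p, 𝔽_p)` acts on `M` through the values of its elements
on `s`. Locally constant functions `e x` with `e x y = δ_{xy}` on `s` then act as a complete
family of orthogonal idempotents projecting `M` onto the `M_(x)`, and `M = 𝓘(x)M ⊕ M_(x)`.
-/

section ContinuousMap

variable {X K : Type*} [TopologicalSpace X] [CommRing K] [TopologicalSpace K] [DiscreteTopology K]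

theorem ContinuousMap.exists_apply_eq_one_mul_eq_zero_s6 {F : C(X, K)} {x : X} (hF : F x = 0) :
    ∃ G : C(X, K), G x = 1 ∧ G * F = 0 := by
  classical
  let indicatorZero : C(K, K) := ⟨fun k => if k = 0 then 1 else 0, continuous_of_discreteTopology⟩
  refine ⟨indicatorZero.comp F, by simp [indicatorZero, hF], ?_⟩
  ext y
  by_cases hy : F y = 0 <;> simp [indicatorZero, hy]

theorem ContinuousMap.mem_ideal_of_forall_apply_ne_zero [CompactSpace X] {J : Ideal C(X, K)}
    {F : C(X, K)} (h : ∀ x, F x ≠ 0 → ∃ G ∈ J, G x = 1) : F ∈ J := by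
  choose! G hGJ hG using h
  have hsupp : IsCompact {x | F x ≠ 0} := ((isClosed_discrete {0}ᶜ).preimage F.continuous).isCompact
  obtain ⟨t, hts, hcover⟩ := hsupp.elim_nhds_subcover (fun x => {y | G x y = 1})
    fun x hx => ((isOpen_discrete {1}).preimage (G x).continuous).mem_nhds (hG x hx)
  set P := ∏ x ∈ t, (1 - G x)
  -- `P ≡ 1` modulo `J`, while `F * P = 0` because the `G x` cover the support of `F`.
  have hP : 1 - P ∈ J := by
    rw [← Ideal.Quotient.eq_zero_iff_mem, map_sub, map_one, map_prod,
      Finset.prod_eq_one fun x hx => ?_, sub_self]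
    rw [map_sub, map_one, Ideal.Quotient.eq_zero_iff_mem.mpr (hGJ x (hts x hx)), sub_zero]
  have hFP : F * P = 0 := by
    ext z
    by_cases hz : F z = 0
    · simp [hz]
    obtain ⟨x, hxt, hxz⟩ := Set.mem_iUnion₂.mp (hcover hz)
    simp only [ContinuousMap.mul_apply, ContinuousMap.zero_apply, P, ContinuousMap.prod_apply]
    exact mul_eq_zero_of_right _ (Finset.prod_eq_zero hxt (by simp [hxz.out]))
  simpa [mul_sub, hFP] using J.mul_mem_left F hP

theorem ContinuousMap.exists_apply_eq_one_and_eq_zero [TotallySeparatedSpace X] (x : X)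
    (s : Finset X) : ∃ e : C(X, K), e x = 1 ∧ ∀ y ∈ s, y ≠ x → e y = 0 := by
  classical
  induction s using Finset.induction_on with
  | empty => exact ⟨1, rfl, by simp⟩
  | insert y s _ ih =>
    obtain ⟨e, hex, hes⟩ := ih
    by_cases hyx : y = x
    · exact ⟨e, hex, by simpa [hyx] using hes⟩
    obtain ⟨U, hU, hxU, hyU⟩ := exists_isClopen_of_totally_separated (Ne.symm hyx)
    let χ : C(X, K) := (LocallyConstant.charFn K hU).toContinuousMap
    refine ⟨e * χ, by simp [χ, LocallyConstant.coe_charFn, hex, hxU], ?_⟩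
    rintro z hz hzx
    rcases Finset.mem_insert.mp hz with rfl | hz
    · simp [χ, LocallyConstant.coe_charFn, Set.indicator_of_notMem hyU]
    · simp [hes z hz hzx]

variable {M : Type*} [AddCommGroup M] [Module C(X, K) M]

theorem exists_apply_eq_one_smul_eq_zero_of_mem_smul_top {I : Ideal C(X, K)} {x : X}
    (hI : ∀ F ∈ I, F x = 0) {u : M} (hu : u ∈ I • (⊤ : Submodule C(X, K) M)) :
    ∃ G : C(X, K), G x = 1 ∧ G • u = 0 := by
  refine Submodule.smul_induction_on hu (fun F hF m _ => ?_) fun u v hu hv => ?_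
  · obtain ⟨G, hGx, hGF⟩ := ContinuousMap.exists_apply_eq_one_mul_eq_zero_s6 (hI F hF)
    exact ⟨G, hGx, by rw [smul_smul, hGF, zero_smul]⟩
  · obtain ⟨G, hGx, hGu⟩ := hu
    obtain ⟨H, hHx, hHv⟩ := hv
    refine ⟨G * H, by simp [hGx, hHx], ?_⟩
    rw [smul_add, mul_comm, mul_smul, hGu, smul_zero, zero_add, mul_comm, mul_smul, hHv,
      smul_zero]

end ContinuousMap

theorem DirectSum.isInternal_submodule_of_smul {R M ι : Type*} [CommRing R] [AddCommGroup M]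
    [Module R M] [Fintype ι] [DecidableEq ι] {N : ι → Submodule R M} (e : ι → R)
    (hsum : ∀ u : M, ∑ i, e i • u = u) (hmem : ∀ i u, e i • u ∈ N i)
    (hzero : ∀ i j, i ≠ j → ∀ u ∈ N j, e i • u = 0) : DirectSum.IsInternal N := by
  have hfix : ∀ i, ∀ u ∈ N i, e i • u = u := fun i u hu => by
    rw [← Finset.sum_eq_single i (fun j _ hji => hzero j i hji u hu)
      (absurd (Finset.mem_univ i)), hsum]
  refine (isInternal_submodule_iff_iSupIndep_and_iSup_eq_top N).mpr ⟨fun i => ?_, ?_⟩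
  · have hker : ⨆ (j) (_ : j ≠ i), N j ≤ LinearMap.ker (e i • LinearMap.id) :=
      iSup₂_le fun j hji u hu => LinearMap.mem_ker.mpr <| by
        rw [LinearMap.smul_apply, LinearMap.id_apply, hzero i j hji.symm u hu]
    rw [Submodule.disjoint_def]
    intro u hu hu'
    simpa [hfix i u hu] using hker hu'
  · refine eq_top_iff.mpr fun u _ => hsum u ▸ Submodule.sum_mem _ fun i _ => ?_
    exact Submodule.mem_iSup_of_mem i (hmem i u)

section PadicInt

variable {p : ℕ} [Fact p.Prime] {M : Type*} [AddCommGroup M] [Module C(PadicInt p, ZMod p) M]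
  {s : Finset (PadicInt p)} {x : PadicInt p}

theorem mem_evalIdeal {F : C(PadicInt p, ZMod p)} : F ∈ evalIdeal p x ↔ F x = 0 := Iff.rfl

theorem smul_eq_zero_of_forall_apply_eq_zero
    (hs : ∀ y ∉ s, evalIdeal p y • (⊤ : Submodule C(PadicInt p, ZMod p) M) = ⊤)
    {F : C(PadicInt p, ZMod p)} (hF : ∀ y ∈ s, F y = 0) (u : M) : F • u = 0 := by
  suffices F ∈ LinearMap.ker (LinearMap.toSpanSingleton _ M u) by simpa using this
  refine ContinuousMap.mem_ideal_of_forall_apply_ne_zero fun y hy => ?_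
  obtain ⟨G, hGy, hGu⟩ := exists_apply_eq_one_smul_eq_zero_of_mem_smul_top
    (fun _ => mem_evalIdeal.mp) (u := u) (by rw [hs y (mt (hF y) hy)]; exact Submodule.mem_top)
  exact ⟨G, by simpa using hGu, hGy⟩

theorem smul_eq_zero_of_mem_eigenSubmodule {u : M} (hu : u ∈ eigenSubmodule p M x)
    {F : C(PadicInt p, ZMod p)} (hF : F x = 0) : F • u = 0 :=
  hu F (mem_evalIdeal.mpr hF)

theorem smul_eq_self_of_mem_eigenSubmodule {u : M} (hu : u ∈ eigenSubmodule p M x)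
    {e : C(PadicInt p, ZMod p)} (he : e x = 1) : e • u = u := by
  have h := smul_eq_zero_of_mem_eigenSubmodule hu (F := 1 - e) (by simp [he])
  rwa [sub_smul, one_smul, sub_eq_zero, eq_comm] at h

theorem smul_mem_eigenSubmodule
    (hs : ∀ y ∉ s, evalIdeal p y • (⊤ : Submodule C(PadicInt p, ZMod p) M) = ⊤)
    {e : C(PadicInt p, ZMod p)} (he : ∀ y ∈ s, y ≠ x → e y = 0) (u : M) :
    e • u ∈ eigenSubmodule p M x := by
  intro F hF
  rw [smul_smul]
  refine smul_eq_zero_of_forall_apply_eq_zero hs (fun y hy => ?_) u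
  rcases eq_or_ne y x with rfl | hyx
  · simp [mem_evalIdeal.mp hF]
  · simp [he y hy hyx]

theorem isCompl_evalIdeal_smul_top_eigenSubmodule
    (hs : ∀ y ∉ s, evalIdeal p y • (⊤ : Submodule C(PadicInt p, ZMod p) M) = ⊤)
    (x : PadicInt p) :
    IsCompl (evalIdeal p x • (⊤ : Submodule C(PadicInt p, ZMod p) M)) (eigenSubmodule p M x) := by
  obtain ⟨e, hex, hes⟩ := ContinuousMap.exists_apply_eq_one_and_eq_zero (K := ZMod p) x s
  constructor
  · rw [Submodule.disjoint_def]
    intro u hu hu'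
    obtain ⟨G, hGx, hGu⟩ :=
      exists_apply_eq_one_smul_eq_zero_of_mem_smul_top (fun _ => mem_evalIdeal.mp) hu
    rw [← smul_eq_self_of_mem_eigenSubmodule hu' hGx, hGu]
  · refine codisjoint_iff.mpr (eq_top_iff.mpr fun v _ => ?_)
    have hv : v = (1 - e) • v + e • v := by rw [sub_smul, one_smul, sub_add_cancel]
    rw [hv]
    exact Submodule.add_mem_sup
      (Submodule.smul_mem_smul (mem_evalIdeal.mpr (by simp [hex])) Submodule.mem_top)
      (smul_mem_eigenSubmodule hs hes v)

theorem sum_smul_eq_self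
    (hs : ∀ y ∉ s, evalIdeal p y • (⊤ : Submodule C(PadicInt p, ZMod p) M) = ⊤)
    {e : PadicInt p → C(PadicInt p, ZMod p)} (he₁ : ∀ x, e x x = 1)
    (he₀ : ∀ x, ∀ y ∈ s, y ≠ x → e x y = 0) (u : M) : ∑ x ∈ s, e x • u = u := by
  have h := smul_eq_zero_of_forall_apply_eq_zero hs (F := 1 - ∑ x ∈ s, e x) (fun y hy => by
    rw [ContinuousMap.sub_apply, ContinuousMap.one_apply, ContinuousMap.sum_apply,
      Finset.sum_eq_single y (fun x _ hxy => he₀ x y hy hxy.symm) (absurd hy), he₁, sub_self]) u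
  rwa [sub_smul, one_smul, sub_eq_zero, Finset.sum_smul, eq_comm] at h

end PadicInt

/-- Let `M` be a module over `C⁰(ℤ_p, 𝔽_p)` such that the set of `x ∈ ℤ_p`
with `M_x = M/𝓘(x)M ≠ 0` is finite, equal to a finset `s = {x₁,…,xₙ}`. Then `M` is the
internal direct sum of the submodules `M_(x)` for `x ∈ s`, and `M_(x) ≅ M_x` as
`C⁰(ℤ_p, 𝔽_p)`-modules for each `x ∈ s`. -/
theorem internal_directSum_of_finite_support (p : ℕ) [Fact p.Prime]
    (M : Type*) [AddCommGroup M] [Module C(PadicInt p, ZMod p) M]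
    (s : Finset (PadicInt p))
    (hs : ∀ x : PadicInt p,
      (evalIdeal p x • (⊤ : Submodule C(PadicInt p, ZMod p) M) ≠ ⊤) ↔ x ∈ s) :
    DirectSum.IsInternal (fun x : s => eigenSubmodule p M (x : PadicInt p)) ∧
    ∀ x ∈ s, Nonempty
      ((eigenSubmodule p M x) ≃ₗ[C(PadicInt p, ZMod p)]
        (M ⧸ (evalIdeal p x • (⊤ : Submodule C(PadicInt p, ZMod p) M)))) := by
  have hs' : ∀ x ∉ s, evalIdeal p x • (⊤ : Submodule C(PadicInt p, ZMod p) M) = ⊤ :=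
    fun x hx => not_not.mp (mt (hs x).mp hx)
  choose e he₁ he₀ using fun x => ContinuousMap.exists_apply_eq_one_and_eq_zero (K := ZMod p) x s
  refine ⟨DirectSum.isInternal_submodule_of_smul (fun x : s => e x) (fun u => ?_)
    (fun x => smul_mem_eigenSubmodule hs' (he₀ x)) (fun x y hxy u hu => ?_),
    fun x _ => ⟨(Submodule.quotientEquivOfIsCompl _ _
      (isCompl_evalIdeal_smul_top_eigenSubmodule hs' x)).symm⟩⟩
  · rw [Finset.sum_coe_sort s (fun x => e x • u)]
    exact sum_smul_eq_self hs' he₁ he₀ u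
  · exact smul_eq_zero_of_mem_eigenSubmodule hu (he₀ x y y.2 (Subtype.coe_ne_coe.mpr hxy.symm))
end

section
/- Let K be a perfect field of characteristic p and R = K[x₁,…,x_n]. Let I = ⟨f₁+g₁,…,f_m+g_m, h₁,…,h_l⟩ be a nonzero ideal contained in 𝔪, with each f_i nonzero. Let d₀ = min_i wmd(f_i), and assume wmd(g_i) ≥ d₀ for every nonzero g_i and wmd(h_j) ≥ d₀ for every nonzero h_j. Then for every a ∈ (ℕ⁺)ⁿ the F-threshold satisfies c^{𝔪(a)}(I) ≤ w(a)/d₀. -/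
open Filter

/-- Weighted degree of an exponent vector: `w(a) = Σ wᵢ aᵢ`. -/
def wdeg {n : ℕ} (w : Fin n → ℕ) (a : Fin n →₀ ℕ) : ℕ := ∑ i, w i * a i

/-- `wmd f = min {w(a) : a ∈ Supp f}`. -/
noncomputable def wmd {n : ℕ} {K : Type*} [CommSemiring K] (w : Fin n → ℕ)
    (f : MvPolynomial (Fin n) K) : ℕ :=
  sInf (wdeg w '' (f.support : Set (Fin n →₀ ℕ)))

/-- The monomial ideal `𝔪(a) = ⟨x₁^{a₁},…,xₙ^{aₙ}⟩`. -/
noncomputable def mIdeal {n : ℕ} (K : Type*) [CommSemiring K] (a : Fin n → ℕ) :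
    Ideal (MvPolynomial (Fin n) K) :=
  Ideal.span (Set.range fun i : Fin n => MvPolynomial.X i ^ a i)

/-- The maximal ideal `𝔪 = ⟨x₁,…,xₙ⟩`. -/
noncomputable def mMax {n : ℕ} (K : Type*) [CommSemiring K] : Ideal (MvPolynomial (Fin n) K) :=
  Ideal.span (Set.range (MvPolynomial.X : Fin n → MvPolynomial (Fin n) K))

/-!
Every generator of `I` involves only monomials of weighted degree `≥ d₀`, hence every element
of `Iᴺ` involves only monomials of weighted degree `≥ N d₀`. An element outside
`𝔪(a)^{[p^e]} ⊇ ⟨x₁^{a₁pᵉ},…,xₙ^{aₙpᵉ}⟩` has a monomial `x^b` with `bᵢ < aᵢpᵉ` for all `i`,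
of weighted degree `< pᵉ w(a)`. So `d₀ ν(pᵉ) ≤ pᵉ w(a)` for every `e`, and the bound passes
to the limit.
-/

open MvPolynomial

theorem pow_mem_frobeniusPower {R : Type*} [CommRing R] (p e : ℕ) {I : Ideal R} {x : R}
    (hx : x ∈ I) : x ^ p ^ e ∈ frobeniusPower p e I :=
  Ideal.subset_span ⟨x, hx, rfl⟩

section WeightedDegree

variable {n : ℕ} (w : Fin n → ℕ)

theorem wdeg_add (b c : Fin n →₀ ℕ) : wdeg w (b + c) = wdeg w b + wdeg w c := by
  simp only [wdeg, Finsupp.add_apply, mul_add, Finset.sum_add_distrib]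

theorem wmd_le_wdeg {K : Type*} [CommSemiring K] {f : MvPolynomial (Fin n) K} {b : Fin n →₀ ℕ}
    (hb : b ∈ f.support) : wmd w f ≤ wdeg w b :=
  Nat.sInf_le ⟨b, hb, rfl⟩

variable (K : Type*) [CommSemiring K]

def wdegGeIdeal (d : ℕ) : Ideal (MvPolynomial (Fin n) K) where
  carrier := {x | ∀ b ∈ x.support, d ≤ wdeg w b}
  zero_mem' := by simp
  add_mem' {x y} hx hy b hb := (Finset.mem_union.mp (support_add hb)).elim (hx b) (hy b)
  smul_mem' r x hx b hb := by
    obtain ⟨u, -, v, hv, rfl⟩ := Finset.mem_add.mp (support_mul r x hb)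
    rw [wdeg_add]
    exact (hx v hv).trans (Nat.le_add_left _ _)

variable {w K}

theorem mem_wdegGeIdeal_of_le_wmd {d : ℕ} {f : MvPolynomial (Fin n) K}
    (hf : f ≠ 0 → d ≤ wmd w f) : f ∈ wdegGeIdeal w K d := fun b hb =>
  (hf (by rintro rfl; simp at hb)).trans (wmd_le_wdeg w hb)

theorem wdegGeIdeal_mul_le (d d' : ℕ) :
    wdegGeIdeal w K d * wdegGeIdeal w K d' ≤ wdegGeIdeal w K (d + d') := by
  rw [Ideal.mul_le]
  intro r hr s hs b hb
  obtain ⟨u, hu, v, hv, rfl⟩ := Finset.mem_add.mp (support_mul r s hb)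
  rw [wdeg_add]
  exact Nat.add_le_add (hr u hu) (hs v hv)

theorem pow_le_wdegGeIdeal {I : Ideal (MvPolynomial (Fin n) K)} {d : ℕ}
    (hI : I ≤ wdegGeIdeal w K d) (N : ℕ) : I ^ N ≤ wdegGeIdeal w K (N * d) := by
  induction N with
  | zero => intro x _ b _; simp
  | succ N ih =>
    rw [pow_succ, Nat.succ_mul]
    exact (Ideal.mul_mono ih hI).trans (wdegGeIdeal_mul_le _ _)

end WeightedDegree

section MonomialIdeal

variable {n : ℕ} {K : Type*}

theorem mem_span_X_pow_of_forall_support [CommSemiring K] (c : Fin n → ℕ)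
    {x : MvPolynomial (Fin n) K} (hx : ∀ b ∈ x.support, ∃ i, c i ≤ b i) :
    x ∈ Ideal.span (Set.range fun i => (X i : MvPolynomial (Fin n) K) ^ c i) := by
  rw [x.as_sum]
  refine Ideal.sum_mem _ fun b hb => ?_
  obtain ⟨i, hi⟩ := hx b hb
  have hdvd : monomial b (x.coeff b) = monomial (b - Finsupp.single i (c i)) (x.coeff b) * X i ^ c i := by
    rw [X_pow_eq_monomial, monomial_mul, mul_one, tsub_add_cancel_of_le (Finsupp.single_le_iff.mpr hi)]
  rw [hdvd]
  exact Ideal.mul_mem_left _ _ (Ideal.subset_span ⟨i, rfl⟩)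

theorem span_X_pow_mul_le_frobeniusPower [CommRing K] (p e : ℕ) (a : Fin n → ℕ) :
    Ideal.span (Set.range fun i => (X i : MvPolynomial (Fin n) K) ^ (a i * p ^ e)) ≤
      frobeniusPower p e (mIdeal K a) := by
  rw [Ideal.span_le]
  rintro _ ⟨i, rfl⟩
  dsimp only
  rw [pow_mul]
  exact pow_mem_frobeniusPower p e (Ideal.subset_span ⟨i, rfl⟩)

theorem exists_mem_support_lt_of_notMem_frobeniusPower [CommRing K] {p e : ℕ} {a : Fin n → ℕ}
    {x : MvPolynomial (Fin n) K} (hx : x ∉ frobeniusPower p e (mIdeal K a)) :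
    ∃ b ∈ x.support, ∀ i, b i < a i * p ^ e := by
  by_contra! hcon
  exact hx (span_X_pow_mul_le_frobeniusPower p e a (mem_span_X_pow_of_forall_support _ hcon))

end MonomialIdeal

section NuInvariant

variable {n : ℕ} {K : Type*} [CommRing K] {w : Fin n → ℕ} {I : Ideal (MvPolynomial (Fin n) K)}
  {d : ℕ} (p : ℕ) (a : Fin n → ℕ) (e : ℕ)

theorem mul_le_of_not_pow_le_frobeniusPower (hI : I ≤ wdegGeIdeal w K d) {N : ℕ}
    (hN : ¬ I ^ N ≤ frobeniusPower p e (mIdeal K a)) :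
    N * d ≤ p ^ e * ∑ i, w i * a i := by
  obtain ⟨x, hxI, hxF⟩ := SetLike.not_le_iff_exists.mp hN
  obtain ⟨b, hb, hblt⟩ := exists_mem_support_lt_of_notMem_frobeniusPower hxF
  calc N * d ≤ wdeg w b := pow_le_wdegGeIdeal hI N hxI b hb
    _ ≤ ∑ i, w i * (a i * p ^ e) :=
      Finset.sum_le_sum fun i _ => Nat.mul_le_mul_left _ (hblt i).le
    _ = p ^ e * ∑ i, w i * a i := by
      rw [Finset.mul_sum]
      exact Finset.sum_congr rfl fun i _ => by ring

theorem mul_nuInv_le (hI : I ≤ wdegGeIdeal w K d) :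
    d * nuInv p (mIdeal K a) I e ≤ p ^ e * ∑ i, w i * a i := by
  obtain rfl | hd := Nat.eq_zero_or_pos d
  · simp
  set S := {N : ℕ | ¬ I ^ N ≤ frobeniusPower p e (mIdeal K a)}
  have hS : ∀ N ∈ S, N * d ≤ p ^ e * ∑ i, w i * a i := fun N hN =>
    mul_le_of_not_pow_le_frobeniusPower p a e hI hN
  rw [nuInv, mul_comm]
  obtain hempty | hne := S.eq_empty_or_nonempty
  · simp [S, hempty]
  · have hbdd : BddAbove S :=
      ⟨_, fun N hN => (Nat.le_mul_of_pos_right N hd).trans (hS N hN)⟩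
    exact hS _ (Nat.sSup_mem hne hbdd)

theorem mul_nuInv_div_le (hp : 0 < p) (hI : I ≤ wdegGeIdeal w K d) :
    (d : ℝ) * (nuInv p (mIdeal K a) I e / (p : ℝ) ^ e) ≤ (∑ i, w i * a i : ℕ) := by
  rw [← mul_div_assoc, div_le_iff₀ (by positivity)]
  exact_mod_cast (mul_nuInv_le p a e hI).trans_eq (mul_comm _ _)

end NuInvariant

theorem fThreshold_le_of_wmd_bound_general (p : ℕ) [Fact p.Prime] (K : Type*) [Field K]
    (n : ℕ) (w : Fin n → ℕ)
    (m l : ℕ) (f g : Fin m → MvPolynomial (Fin n) K) (h : Fin l → MvPolynomial (Fin n) K)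
    (I : Ideal (MvPolynomial (Fin n) K))
    (hI : I = Ideal.span (Set.range (fun i => f i + g i) ∪ Set.range h))
    (d₀ : ℕ) (hd₀ : IsLeast {k : ℕ | ∃ i, wmd w (f i) = k} d₀)
    (hg : ∀ i, g i ≠ 0 → d₀ ≤ wmd w (g i))
    (hh : ∀ j, h j ≠ 0 → d₀ ≤ wmd w (h j))
    (a : Fin n → ℕ)
    (c : ℝ) (hc : Tendsto (fun e : ℕ => (nuInv p (mIdeal K a) I e : ℝ) / (p : ℝ) ^ e)
      atTop (nhds c)) :
    (d₀ : ℝ) * c ≤ (∑ i, w i * a i : ℕ) := by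
  have hIw : I ≤ wdegGeIdeal w K d₀ := by
    rw [hI, Ideal.span_le]
    rintro _ (⟨i, rfl⟩ | ⟨j, rfl⟩)
    · exact add_mem (mem_wdegGeIdeal_of_le_wmd fun _ => hd₀.2 ⟨i, rfl⟩)
        (mem_wdegGeIdeal_of_le_wmd (hg i))
    · exact mem_wdegGeIdeal_of_le_wmd (hh j)
  exact le_of_tendsto (hc.const_mul _) (Eventually.of_forall (mul_nuInv_div_le p a · (Fact.out : p.Prime).pos hIw))

/-- Let `K` be a perfect field of characteristic `p`, `R = K[x₁,…,xₙ]`,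
`I = ⟨f₁+g₁,…,f_m+g_m, h₁,…,h_l⟩` a nonzero ideal contained in `𝔪`, with each `fᵢ`
nonzero, `d₀ = minᵢ wmd(fᵢ)`, `wmd(gᵢ) ≥ d₀` for every nonzero `gᵢ` and `wmd(hⱼ) ≥ d₀`
for every nonzero `hⱼ`. Then for every `a ∈ (ℕ⁺)ⁿ` the F-threshold satisfies
`c^{𝔪(a)}(I) ≤ w(a)/d₀` (stated multiplied through by `d₀`). -/
theorem fThreshold_le_of_wmd_bound (p : ℕ) [Fact p.Prime] (K : Type*) [Field K]
    [CharP K p] [PerfectRing K p] (n : ℕ) (w : Fin n → ℕ) (hw : ∀ i, 0 < w i)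
    (m l : ℕ) (f g : Fin m → MvPolynomial (Fin n) K) (h : Fin l → MvPolynomial (Fin n) K)
    (I : Ideal (MvPolynomial (Fin n) K))
    (hI : I = Ideal.span (Set.range (fun i => f i + g i) ∪ Set.range h))
    (hInz : I ≠ ⊥) (hIm : I ≤ mMax K)
    (hf : ∀ i, f i ≠ 0)
    (d₀ : ℕ) (hd₀ : IsLeast {k : ℕ | ∃ i, wmd w (f i) = k} d₀)
    (hg : ∀ i, g i ≠ 0 → d₀ ≤ wmd w (g i))
    (hh : ∀ j, h j ≠ 0 → d₀ ≤ wmd w (h j))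
    (a : Fin n → ℕ) (ha : ∀ i, 0 < a i)
    (c : ℝ) (hc : Tendsto (fun e : ℕ => (nuInv p (mIdeal K a) I e : ℝ) / (p : ℝ) ^ e)
      atTop (nhds c)) :
    (d₀ : ℝ) * c ≤ (∑ i, w i * a i : ℕ) :=
  fThreshold_le_of_wmd_bound_general p K n w m l f g h I hI d₀ hd₀ hg hh a c hc
end

section
/- Let K be a perfect field of characteristic p and R = K[x₁,…,x_n]. Let I = ⟨f₁+g₁,…,f_m+g_m, h₁,…,h_l⟩ and I₀ = ⟨f₁,…,f_m⟩ be nonzero ideals contained in 𝔪, where each f_i is nonzero and weighted homogeneous of type (w,d_i), and where wmd(g_i) > d_i for every nonzero g_i. Then for every a ∈ (ℕ⁺)ⁿ one has c^{𝔪(a)}(I) ≥ c^{𝔪(a)}(I₀). -/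
/-! Since both thresholds are limits of `ν / p ^ e`, it suffices to compare the ν-invariants
for each `e`. The Frobenius power `𝔪(a)^{[p^e]} = 𝔪(p^e a)` is a monomial ideal, so it contains
the lowest-weight part of each of its elements. A product of `k` generators `fᵢ + gᵢ` of `I` has
as lowest-weight part the corresponding product of the `fᵢ`; hence `I^k ⊆ 𝔪(a)^{[p^e]}` forces
`I₀^k ⊆ 𝔪(a)^{[p^e]}`, i.e. `ν_{I₀} ≤ ν_I`. The inclusion `I ⊆ 𝔪` keeps `ν_I` finite. -/

open Filter

open MvPolynomial

section Ideal

variable {R : Type*} [CommRing R]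

lemma Ideal.finsetSup_pow_le {ι : Type*} (s : Finset ι) (J : ι → Ideal R) (b : ι → ℕ) :
    s.sup J ^ (∑ i ∈ s, b i + 1) ≤ s.sup fun i => J i ^ b i := by
  classical
  induction s using Finset.induction_on with
  | empty => simp
  | insert i s hi ih =>
    rw [Finset.sup_insert, Finset.sup_insert, Finset.sum_insert hi, add_assoc]
    exact Ideal.sup_pow_add_le_pow_sup_pow.trans (sup_le_sup_left ih _)

lemma Ideal.span_range_pow_le_of_forall_prod_mem {ι : Type*} (f : ι → R) (J : Ideal R) (k : ℕ)
    (h : ∀ idx : Fin k → ι, ∏ j, f (idx j) ∈ J) : Ideal.span (Set.range f) ^ k ≤ J := by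
  rw [Ideal.span, Submodule.span_pow, Submodule.span_le]
  intro x hx
  obtain ⟨F, rfl⟩ := Set.mem_pow.mp hx
  choose idx hidx using fun j => (F j).2
  rw [List.prod_ofFn]
  simpa only [hidx, SetLike.mem_coe] using h idx

lemma frobeniusPower_span (p e : ℕ) [ExpChar R p] (S : Set R) :
    frobeniusPower p e (Ideal.span S) = Ideal.span ((· ^ p ^ e) '' S) := by
  have hφ : (· ^ p ^ e) = ⇑(iterateFrobenius R p e) :=
    funext fun x => (iterateFrobenius_def p e x).symm
  rw [frobeniusPower, hφ]
  exact Ideal.map_span _ S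

lemma nuInv_le_nuInv (p e : ℕ) {𝔞 I J : Ideal R}
    (hI : ∃ N, I ^ N ≤ frobeniusPower p e 𝔞)
    (hJ : ∀ k, I ^ k ≤ frobeniusPower p e 𝔞 → J ^ k ≤ frobeniusPower p e 𝔞) :
    nuInv p 𝔞 J e ≤ nuInv p 𝔞 I e := by
  obtain ⟨N, hN⟩ := hI
  refine csSup_le_csSup' ⟨N, fun k hk => ?_⟩ fun k hk hIk => hk (hJ k hIk)
  by_contra! hNk
  exact hk ((Ideal.pow_le_pow_right hNk.le).trans hN)

end Ideal

namespace MvPolynomial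

variable {σ R : Type*} [CommSemiring R] {w : σ → ℕ}

lemma le_weight_of_mem_support_mul {x y : MvPolynomial σ R} {D D' : ℕ}
    (hx : ∀ t ∈ x.support, D ≤ Finsupp.weight w t)
    (hy : ∀ t ∈ y.support, D' ≤ Finsupp.weight w t) :
    ∀ t ∈ (x * y).support, D + D' ≤ Finsupp.weight w t := by
  classical
  intro t ht
  obtain ⟨u, hu, v, hv, rfl⟩ := Finset.mem_add.mp (support_mul x y ht)
  rw [map_add]
  exact add_le_add (hx u hu) (hy v hv)

lemma le_weight_of_mem_support_add {x y : MvPolynomial σ R} {D : ℕ}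
    (hx : ∀ t ∈ x.support, D ≤ Finsupp.weight w t)
    (hy : ∀ t ∈ y.support, D ≤ Finsupp.weight w t) :
    ∀ t ∈ (x + y).support, D ≤ Finsupp.weight w t := by
  classical
  intro t ht
  rcases Finset.mem_union.mp (support_add ht) with h | h
  exacts [hx t h, hy t h]

lemma IsWeightedHomogeneous.le_weight {φ : MvPolynomial σ R} {D : ℕ}
    (hφ : IsWeightedHomogeneous w φ D) : ∀ t ∈ φ.support, D ≤ Finsupp.weight w t :=
  fun _ ht => (hφ (mem_support_iff.mp ht)).ge

lemma exists_prod_add_eq_prod_add {ι : Type*} (s : Finset ι) (F G : ι → MvPolynomial σ R)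
    (D : ι → ℕ) (hF : ∀ i ∈ s, IsWeightedHomogeneous w (F i) (D i))
    (hG : ∀ i ∈ s, ∀ t ∈ (G i).support, D i < Finsupp.weight w t) :
    ∃ E, ∏ i ∈ s, (F i + G i) = ∏ i ∈ s, F i + E ∧
      ∀ t ∈ E.support, ∑ i ∈ s, D i < Finsupp.weight w t := by
  classical
  induction s using Finset.induction_on with
  | empty => exact ⟨0, by simp, by simp⟩
  | insert i s hi ih =>
    obtain ⟨E, hE, hEw⟩ := ih (fun j hj => hF j (Finset.mem_insert_of_mem hj))
      (fun j hj => hG j (Finset.mem_insert_of_mem hj))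
    have hFi := IsWeightedHomogeneous.le_weight (hF i (Finset.mem_insert_self i s))
    have hGi := hG i (Finset.mem_insert_self i s)
    have hprod := IsWeightedHomogeneous.le_weight <|
      IsWeightedHomogeneous.prod s F D fun j hj => hF j (Finset.mem_insert_of_mem hj)
    refine ⟨G i * ∏ j ∈ s, F j + (F i + G i) * E, ?_, ?_⟩
    · rw [Finset.prod_insert hi, Finset.prod_insert hi, hE]
      ring
    · rw [Finset.sum_insert hi]
      refine le_weight_of_mem_support_add ?_ ?_
      · intro t ht
        have := le_weight_of_mem_support_mul hGi hprod t ht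
        omega
      · intro t ht
        have := le_weight_of_mem_support_mul
          (le_weight_of_mem_support_add hFi fun t ht => (hGi t ht).le) hEw t ht
        omega

end MvPolynomial

section MonomialIdeal

variable {n : ℕ} {K : Type*}

lemma wdeg_eq_weight (w : Fin n → ℕ) (a : Fin n →₀ ℕ) :
    wdeg w a = Finsupp.weight w a := by
  simp [wdeg, Finsupp.weight_apply, Finsupp.sum_fintype, mul_comm]

lemma mem_mIdeal_iff [CommSemiring K] (b : Fin n → ℕ) (x : MvPolynomial (Fin n) K) :
    x ∈ mIdeal K b ↔ ∀ s ∈ x.support, ∃ i, b i ≤ s i := by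
  have : mIdeal K b = Ideal.span ((fun s => monomial s (1 : K)) ''
      Set.range fun i => Finsupp.single i (b i)) := by
    rw [mIdeal, ← Set.range_comp]
    simp only [Function.comp_def, X_pow_eq_monomial]
  simp only [this, mem_ideal_span_monomial_image, Set.exists_range_iff, Finsupp.single_le_iff]

lemma frobeniusPower_mIdeal [CommRing K] (p e : ℕ) [ExpChar K p] (a : Fin n → ℕ) :
    frobeniusPower p e (mIdeal K a) = mIdeal K fun i => a i * p ^ e := by
  rw [mIdeal, frobeniusPower_span, mIdeal, ← Set.range_comp]
  simp only [Function.comp_def, pow_mul]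

lemma mMax_pow_le_mIdeal [CommRing K] (b : Fin n → ℕ) :
    mMax K ^ (∑ i, b i + 1) ≤ mIdeal K b := by
  have h := Ideal.finsetSup_pow_le Finset.univ
    (fun i => Ideal.span {(X i : MvPolynomial (Fin n) K)}) b
  simp only [Finset.sup_univ_eq_iSup, Ideal.span_singleton_pow] at h
  rwa [mMax, mIdeal, Ideal.span, Submodule.span_range_eq_iSup, Ideal.span,
    Submodule.span_range_eq_iSup]

end MonomialIdeal

section InitialForm

variable {n : ℕ} {K : Type*} {w : Fin n → ℕ}

lemma mem_mIdeal_of_add_mem [CommSemiring K] {b : Fin n → ℕ} {P E : MvPolynomial (Fin n) K}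
    {D : ℕ} (hP : IsWeightedHomogeneous w P D)
    (hE : ∀ t ∈ E.support, D < Finsupp.weight w t) (h : P + E ∈ mIdeal K b) :
    P ∈ mIdeal K b := by
  rw [mem_mIdeal_iff] at h ⊢
  intro s hs
  have hEs : coeff s E = 0 := by
    by_contra hne
    exact (hE s (mem_support_iff.mpr hne)).ne (hP (mem_support_iff.mp hs)).symm
  refine h s (mem_support_iff.mpr ?_)
  rwa [coeff_add, hEs, add_zero, ← mem_support_iff]

lemma span_range_pow_le_mIdeal [CommRing K] {ι : Type*} {f g : ι → MvPolynomial (Fin n) K}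
    {d : ι → ℕ} {I : Ideal (MvPolynomial (Fin n) K)} {b : Fin n → ℕ} {k : ℕ}
    (hfg : ∀ i, f i + g i ∈ I) (hf : ∀ i, IsWeightedHomogeneous w (f i) (d i))
    (hg : ∀ i, ∀ t ∈ (g i).support, d i < Finsupp.weight w t) (hk : I ^ k ≤ mIdeal K b) :
    Ideal.span (Set.range f) ^ k ≤ mIdeal K b := by
  refine Ideal.span_range_pow_le_of_forall_prod_mem f _ k fun idx => ?_
  obtain ⟨E, hE, hEw⟩ := exists_prod_add_eq_prod_add Finset.univ (f ∘ idx) (g ∘ idx)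
    (d ∘ idx) (fun j _ => hf (idx j)) (fun j _ => hg (idx j))
  have hmem : ∏ j, (f (idx j) + g (idx j)) ∈ I ^ k := by
    simpa using Ideal.prod_mem_prod (s := Finset.univ) (I := fun _ => I) fun j _ => hfg (idx j)
  refine mem_mIdeal_of_add_mem (IsWeightedHomogeneous.prod _ _ _ fun j _ => hf (idx j)) hEw ?_
  exact hE ▸ hk hmem

end InitialForm

theorem fThreshold_ge_of_wh_part_general (p : ℕ) [Fact p.Prime] (K : Type*) [Field K]
    [CharP K p] (n : ℕ) (w : Fin n → ℕ)
    (m l : ℕ) (f g : Fin m → MvPolynomial (Fin n) K) (h : Fin l → MvPolynomial (Fin n) K)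
    (I I₀ : Ideal (MvPolynomial (Fin n) K))
    (hI : I = Ideal.span (Set.range (fun i => f i + g i) ∪ Set.range h))
    (hI₀ : I₀ = Ideal.span (Set.range f))
    (hIm : I ≤ mMax K)
    (d : Fin m → ℕ)
    (hWH : ∀ i, ∀ a ∈ (f i).support, wdeg w a = d i)
    (hg : ∀ i, g i ≠ 0 → d i < wmd w (g i))
    (a : Fin n → ℕ)
    (c c₀ : ℝ)
    (hc : Tendsto (fun e : ℕ => (nuInv p (mIdeal K a) I e : ℝ) / (p : ℝ) ^ e)
      atTop (nhds c))
    (hc₀ : Tendsto (fun e : ℕ => (nuInv p (mIdeal K a) I₀ e : ℝ) / (p : ℝ) ^ e)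
      atTop (nhds c₀)) :
    c₀ ≤ c := by
  have hfg : ∀ i, f i + g i ∈ I := fun i => hI ▸ Ideal.subset_span (Or.inl ⟨i, rfl⟩)
  have hf : ∀ i, IsWeightedHomogeneous w (f i) (d i) := fun i s hs =>
    wdeg_eq_weight w s ▸ hWH i s (mem_support_iff.mpr hs)
  have hg' : ∀ i, ∀ t ∈ (g i).support, d i < Finsupp.weight w t := fun i t ht =>
    wdeg_eq_weight w t ▸ (hg i (ne_of_apply_ne support (Finset.ne_empty_of_mem ht))).trans_le
      (Nat.sInf_le ⟨t, ht, rfl⟩)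
  have hν : ∀ e, nuInv p (mIdeal K a) I₀ e ≤ nuInv p (mIdeal K a) I e := by
    intro e
    refine nuInv_le_nuInv p e ⟨∑ i, a i * p ^ e + 1, ?_⟩ fun k hk => ?_
    · rw [frobeniusPower_mIdeal]
      exact (Ideal.pow_right_mono hIm _).trans (mMax_pow_le_mIdeal _)
    · rw [frobeniusPower_mIdeal] at hk ⊢
      exact hI₀ ▸ span_range_pow_le_mIdeal hfg hf hg' hk
  refine le_of_tendsto_of_tendsto' hc₀ hc fun e => ?_
  gcongr
  exact_mod_cast hν e

/-- Let `K` be a perfect field of characteristic `p`, `R = K[x₁,…,xₙ]`.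
Let `I = ⟨f₁+g₁,…,f_m+g_m, h₁,…,h_l⟩` and `I₀ = ⟨f₁,…,f_m⟩` be nonzero ideals contained
in `𝔪`, where each `fᵢ` is nonzero and weighted homogeneous of type `(w, dᵢ)`, and where
`wmd(gᵢ) > dᵢ` for every nonzero `gᵢ`. Then for every `a ∈ (ℕ⁺)ⁿ` one has
`c^{𝔪(a)}(I) ≥ c^{𝔪(a)}(I₀)`. -/
theorem fThreshold_ge_of_wh_part (p : ℕ) [Fact p.Prime] (K : Type*) [Field K]
    [CharP K p] [PerfectRing K p] (n : ℕ) (w : Fin n → ℕ) (hw : ∀ i, 0 < w i)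
    (m l : ℕ) (f g : Fin m → MvPolynomial (Fin n) K) (h : Fin l → MvPolynomial (Fin n) K)
    (I I₀ : Ideal (MvPolynomial (Fin n) K))
    (hI : I = Ideal.span (Set.range (fun i => f i + g i) ∪ Set.range h))
    (hI₀ : I₀ = Ideal.span (Set.range f))
    (hInz : I ≠ ⊥) (hI₀nz : I₀ ≠ ⊥) (hIm : I ≤ mMax K) (hI₀m : I₀ ≤ mMax K)
    (d : Fin m → ℕ)
    (hf : ∀ i, f i ≠ 0)
    (hWH : ∀ i, ∀ a ∈ (f i).support, wdeg w a = d i)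
    (hg : ∀ i, g i ≠ 0 → d i < wmd w (g i))
    (a : Fin n → ℕ) (ha : ∀ i, 0 < a i)
    (c c₀ : ℝ)
    (hc : Tendsto (fun e : ℕ => (nuInv p (mIdeal K a) I e : ℝ) / (p : ℝ) ^ e)
      atTop (nhds c))
    (hc₀ : Tendsto (fun e : ℕ => (nuInv p (mIdeal K a) I₀ e : ℝ) / (p : ℝ) ^ e)
      atTop (nhds c₀)) :
    c₀ ≤ c :=
  fThreshold_ge_of_wh_part_general p K n w m l f g h I I₀ hI hI₀ hIm d hWH hg a c c₀ hc hc₀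
end
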